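/- arXiv:1504.00210 — 12 statements merged into one kernel-verified Lean document; each statement's English description precedes it below -/
import Mathlib

section
/- Let Md, Me, Mf be the midpoints of the segments AD, BE, CF respectively. Then the three lines D0Md, E0Me, F0Mf all pass through the isotomcomplement Q of P; that is, each of the triples {D0, Md, Q}, {E0, Me, Q}, {F0, Mf, Q} is collinear. -/
/-!
The complement map `K` (homothety about the centroid with ratio `-1/2`) is affine, so it
preserves collinearity. It sends `A` to `D0`, and the reflection `D3` of `D` in `D0` to the
midpoint `Md` of `AD`; hence it carries the line `A D3 P'` onto a line through `D0`, `Md` and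
`Q = K(P')`, and likewise at the other two vertices.
-/

open EuclideanGeometry Affine

local notation "Pt" => EuclideanSpace ℝ (Fin 2)

theorem Collinear.image_affineMap {k V₁ V₂ P₁ P₂ : Type*} [DivisionRing k]
    [AddCommGroup V₁] [Module k V₁] [AddTorsor V₁ P₁]
    [AddCommGroup V₂] [Module k V₂] [AddTorsor V₂ P₂]
    {s : Set P₁} (h : Collinear k s) (f : P₁ →ᵃ[k] P₂) : Collinear k (f '' s) := by
  obtain ⟨p₀, v, hv⟩ := (collinear_iff_exists_forall_eq_smul_vadd s).mp h
  refine (collinear_iff_exists_forall_eq_smul_vadd _).mpr ⟨f p₀, f.linear v, ?_⟩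
  rintro _ ⟨p, hp, rfl⟩
  obtain ⟨r, rfl⟩ := hv p hp
  exact ⟨r, by rw [f.map_vadd, f.linear.map_smul]⟩

section ComplementMap

variable (k : Type*) {V : Type*} [Field k] [CharZero k] [AddCommGroup V] [Module k V]

def complementMap (A B C : V) : V →ᵃ[k] V :=
  AffineMap.homothety ((1 / 3 : k) • (A + B + C)) (-1 / 2 : k)

variable {k}

theorem complementMap_apply (A B C X : V) :
    complementMap k A B C X = (1 / 2 : k) • (A + B + C - X) := by
  rw [complementMap, AffineMap.homothety_apply, vsub_eq_sub, vadd_eq_add]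
  module

theorem complementMap_vertex (A B C : V) : complementMap k A B C A = midpoint k B C := by
  rw [complementMap_apply, midpoint_eq_smul_add, invOf_eq_inv]
  module

theorem complementMap_pointReflection_midpoint (A B C D : V) :
    complementMap k A B C (Equiv.pointReflection (midpoint k B C) D) = midpoint k A D := by
  rw [complementMap_apply, Equiv.pointReflection_apply, midpoint_eq_smul_add,
    midpoint_eq_smul_add, invOf_eq_inv, vsub_eq_sub, vadd_eq_add]
  module

theorem collinear_midpoint_midpoint_complementMap {A B C D X : V}
    (h : Collinear k {A, Equiv.pointReflection (midpoint k B C) D, X}) :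
    Collinear k {midpoint k B C, midpoint k A D, complementMap k A B C X} := by
  simpa only [Set.image_insert_eq, Set.image_singleton, complementMap_vertex,
    complementMap_pointReflection_midpoint] using h.image_affineMap (complementMap k A B C)

end ComplementMap

theorem stmt_0_general (A B C G D E F D0 E0 F0 D3 E3 F3 P' Q Md Me Mf : Pt)
    (hG : G = (1/3 : ℝ) • (A + B + C))
    (hD0 : D0 = midpoint ℝ B C) (hE0 : E0 = midpoint ℝ C A) (hF0 : F0 = midpoint ℝ A B)
(hD3 : D3 = Equiv.pointReflection D0 D)
    (hE3 : E3 = Equiv.pointReflection E0 E)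
    (hF3 : F3 = Equiv.pointReflection F0 F)
(hP'a : Collinear ℝ {A, D3, P'})
    (hP'b : Collinear ℝ {B, E3, P'})
    (hP'c : Collinear ℝ {C, F3, P'})
    (hQ : Q = AffineMap.homothety G (-1/2 : ℝ) P')
    (hMd : Md = midpoint ℝ A D) (hMe : Me = midpoint ℝ B E) (hMf : Mf = midpoint ℝ C F) :
    Collinear ℝ {D0, Md, Q} ∧ Collinear ℝ {E0, Me, Q} ∧ Collinear ℝ {F0, Mf, Q} := by
  subst hD0 hE0 hF0 hD3 hE3 hF3 hMd hMe hMf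
  have hQA : Q = complementMap ℝ A B C P' := by rw [hQ, hG, complementMap]
  have hQB : Q = complementMap ℝ B C A P' := by rw [hQA, complementMap, complementMap, add_rotate]
  have hQC : Q = complementMap ℝ C A B P' := by rw [hQB, complementMap, complementMap, add_rotate]
  exact ⟨hQA ▸ collinear_midpoint_midpoint_complementMap hP'a,
    hQB ▸ collinear_midpoint_midpoint_complementMap hP'b,
    hQC ▸ collinear_midpoint_midpoint_complementMap hP'c⟩

theorem stmt_0 (A B C G P D E F D0 E0 F0 D3 E3 F3 P' Q Md Me Mf : Pt)
(hABC : AffineIndependent ℝ ![A, B, C])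
    (hG : G = (1/3 : ℝ) • (A + B + C))
    (hPa : ¬ Collinear ℝ {B, C, P})
    (hPb : ¬ Collinear ℝ {C, A, P})
    (hPc : ¬ Collinear ℝ {A, B, P})
    (hD : Collinear ℝ {B, C, D}) (hDcev : Collinear ℝ {A, P, D})
    (hE : Collinear ℝ {C, A, E}) (hEcev : Collinear ℝ {B, P, E})
    (hF : Collinear ℝ {A, B, F}) (hFcev : Collinear ℝ {C, P, F})
    (hD0 : D0 = midpoint ℝ B C) (hE0 : E0 = midpoint ℝ C A) (hF0 : F0 = midpoint ℝ A B)
(hD3 : D3 = Equiv.pointReflection D0 D)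
    (hE3 : E3 = Equiv.pointReflection E0 E)
    (hF3 : F3 = Equiv.pointReflection F0 F)
(hP'a : Collinear ℝ {A, D3, P'})
    (hP'b : Collinear ℝ {B, E3, P'})
    (hP'c : Collinear ℝ {C, F3, P'})
    (hQ : Q = AffineMap.homothety G (-1/2 : ℝ) P')
    (hMd : Md = midpoint ℝ A D) (hMe : Me = midpoint ℝ B E) (hMf : Mf = midpoint ℝ C F) :
    Collinear ℝ {D0, Md, Q} ∧ Collinear ℝ {E0, Me, Q} ∧ Collinear ℝ {F0, Mf, Q} :=
  stmt_0_general A B C G D E F D0 E0 F0 D3 E3 F3 P' Q Md Me Mf hG hD0 hE0 hF0 hD3 hE3 hF3 hP'a hP'b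
    hP'c hQ hMd hMe hMf
end

section
/- (Midpoint Perspectivity Theorem) The triangles A_bE0M_e and A_cF0M_f are perspective: either there exists a point O lying simultaneously on line A_bA_c, on line E0F0, and on line M_eM_f, or these three lines are pairwise parallel. -/
/-!
Write `E = A + e • (C - A)` and `F = A + f • (B - A)`. Every point of the figure is then an
explicit affine combination of `A`, `B`, `C` with coefficients rational in `e` and `f`. When
`e ≠ f` a single point, solved for on the line `A_b A_c`, also lies on the other two lines; when
`e = f` the vectors `A_c - A_b` and `M_f - M_e` are the multiples `e` and `e - 1` of `F₀ - E₀`,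
so the three lines are parallel.
-/

open EuclideanGeometry Affine

local notation "Pt" => EuclideanSpace ℝ (Fin 2)

open AffineMap

theorem AffineSubspace.affineSpan_pair_parallel_of_vsub_eq_smul {k V P : Type*} [Field k]
    [AddCommGroup V] [Module k V] [AddTorsor V P] {p₁ p₂ q₁ q₂ : P} {c : k} (hp : p₁ ≠ p₂)
    (h : p₂ -ᵥ p₁ = c • (q₂ -ᵥ q₁)) : line[k, p₁, p₂] ∥ line[k, q₁, q₂] := by
  have hc : c ≠ 0 := by
    rintro rfl
    exact hp (vsub_eq_zero_iff_eq.mp (by rwa [zero_smul] at h)).symm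
  exact AffineSubspace.affineSpan_pair_parallel_iff_exists_unit_smul.mpr ⟨Units.mk0 c hc, h.symm⟩

theorem Collinear.exists_lineMap_eq {k V P : Type*} [Field k] [AddCommGroup V] [Module k V]
    [AddTorsor V P] {p₁ p₂ p : P} (h : Collinear k {p₁, p₂, p}) (hp : p₁ ≠ p₂) :
    ∃ r : k, lineMap p₁ p₂ r = p :=
  mem_affineSpan_pair_iff_exists_lineMap_eq.mp
    (h.mem_affineSpan_of_mem_of_ne (by simp) (by simp) (by simp) hp)

section MidpointPerspectivity

variable {k V : Type*} [Field k] [CharZero k] [AddCommGroup V] [Module k V]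

theorem exists_mem_midpoint_lines_of_ne (A B C : V) {e f : k} (hef : e ≠ f) :
    ∃ O : V,
      O ∈ line[k, midpoint k A (lineMap A C e), midpoint k A (lineMap A B f)] ∧
      O ∈ line[k, midpoint k A C, midpoint k A B] ∧
      O ∈ line[k, midpoint k B (lineMap A C e), midpoint k C (lineMap A B f)] := by
  have hfe : f - e ≠ 0 := sub_ne_zero.mpr hef.symm
  -- `O = A + (e (f - 1) • (C - A) + f (1 - e) • (B - A)) / (2 (f - e))`
  refine ⟨lineMap (midpoint k A (lineMap A C e)) (midpoint k A (lineMap A B f))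
    ((1 - e) / (f - e)), lineMap_mem_affineSpan_pair _ _ _, ?_, ?_⟩
  all_goals rw [mem_affineSpan_pair_iff_exists_lineMap_eq]
  · refine ⟨f * (1 - e) / (f - e), ?_⟩
    simp only [lineMap_apply_module, midpoint_eq_smul_add, invOf_eq_inv]
    match_scalars <;> field_simp <;> ring
  · refine ⟨-e / (f - e), ?_⟩
    simp only [lineMap_apply_module, midpoint_eq_smul_add, invOf_eq_inv]
    match_scalars <;> field_simp <;> ring

theorem midpoint_lines_parallel (A B C : V) (e : k)
    (hAbAc : midpoint k A (lineMap A C e) ≠ midpoint k A (lineMap A B e))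
    (hMeMf : midpoint k B (lineMap A C e) ≠ midpoint k C (lineMap A B e)) :
    line[k, midpoint k A (lineMap A C e), midpoint k A (lineMap A B e)] ∥
        line[k, midpoint k A C, midpoint k A B] ∧
      line[k, midpoint k A C, midpoint k A B] ∥
        line[k, midpoint k B (lineMap A C e), midpoint k C (lineMap A B e)] ∧
      line[k, midpoint k A (lineMap A C e), midpoint k A (lineMap A B e)] ∥
        line[k, midpoint k B (lineMap A C e), midpoint k C (lineMap A B e)] := by
  have h₁ : line[k, midpoint k A (lineMap A C e), midpoint k A (lineMap A B e)] ∥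
      line[k, midpoint k A C, midpoint k A B] := by
    refine AffineSubspace.affineSpan_pair_parallel_of_vsub_eq_smul (c := e) hAbAc ?_
    simp only [vsub_eq_sub, lineMap_apply_module, midpoint_eq_smul_add, invOf_eq_inv]
    match_scalars <;> ring
  have h₂ : line[k, midpoint k B (lineMap A C e), midpoint k C (lineMap A B e)] ∥
      line[k, midpoint k A C, midpoint k A B] := by
    refine AffineSubspace.affineSpan_pair_parallel_of_vsub_eq_smul (c := e - 1) hMeMf ?_
    simp only [vsub_eq_sub, lineMap_apply_module, midpoint_eq_smul_add, invOf_eq_inv]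
    match_scalars <;> ring
  exact ⟨h₁, h₂.symm, h₁.trans h₂.symm⟩

end MidpointPerspectivity

theorem stmt_2_general (A B C E F E0 F0 Ab Ac Me Mf : Pt)
    (hABC : AffineIndependent ℝ ![A, B, C])
    (hE : Collinear ℝ {A, C, E}) (hF : Collinear ℝ {A, B, F})
    (hE0 : E0 = midpoint ℝ A C) (hF0 : F0 = midpoint ℝ A B)
    (hAb : Ab = midpoint ℝ A E) (hAc : Ac = midpoint ℝ A F)
    (hMe : Me = midpoint ℝ B E) (hMf : Mf = midpoint ℝ C F)
    (hAbAc : Ab ≠ Ac) (hMeMf : Me ≠ Mf) :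
    (∃ O : Pt, O ∈ line[ℝ, Ab, Ac] ∧ O ∈ line[ℝ, E0, F0] ∧ O ∈ line[ℝ, Me, Mf]) ∨
      (line[ℝ, Ab, Ac] ∥ line[ℝ, E0, F0] ∧ line[ℝ, E0, F0] ∥ line[ℝ, Me, Mf] ∧
        line[ℝ, Ab, Ac] ∥ line[ℝ, Me, Mf]) := by
  have hAB : A ≠ B := by simpa using hABC.injective.ne (a₁ := 0) (a₂ := 1) (by decide)
  have hAC : A ≠ C := by simpa using hABC.injective.ne (a₁ := 0) (a₂ := 2) (by decide)
  obtain ⟨e, rfl⟩ := hE.exists_lineMap_eq hAC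
  obtain ⟨f, rfl⟩ := hF.exists_lineMap_eq hAB
  subst hE0 hF0 hAb hAc hMe hMf
  by_cases hef : e = f
  · subst hef
    exact Or.inr (midpoint_lines_parallel A B C e hAbAc hMeMf)
  · exact Or.inl (exists_mem_midpoint_lines_of_ne A B C hef)

theorem stmt_2 (A B C E F E0 F0 Ab Ac Me Mf : Pt)
    (hABC : AffineIndependent ℝ ![A, B, C])
    (hE : Collinear ℝ {A, C, E}) (hF : Collinear ℝ {A, B, F})
    (hEA : E ≠ A) (hEB : E ≠ B) (hEC : E ≠ C)
    (hFA : F ≠ A) (hFB : F ≠ B) (hFC : F ≠ C)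
    (hE0 : E0 = midpoint ℝ A C) (hF0 : F0 = midpoint ℝ A B)
    (hAb : Ab = midpoint ℝ A E) (hAc : Ac = midpoint ℝ A F)
    (hMe : Me = midpoint ℝ B E) (hMf : Mf = midpoint ℝ C F)
    (hAbAc : Ab ≠ Ac) (hMeMf : Me ≠ Mf) :
    (∃ O : Pt, O ∈ line[ℝ, Ab, Ac] ∧ O ∈ line[ℝ, E0, F0] ∧ O ∈ line[ℝ, Me, Mf]) ∨
      (line[ℝ, Ab, Ac] ∥ line[ℝ, E0, F0] ∧ line[ℝ, E0, F0] ∥ line[ℝ, Me, Mf] ∧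
        line[ℝ, Ab, Ac] ∥ line[ℝ, Me, Mf]) :=
  stmt_2_general A B C E F E0 F0 Ab Ac Me Mf hABC hE hF hE0 hF0 hAb hAc hMe hMf hAbAc hMeMf
end

section
/- Let A0, B0, C0 be the midpoints of EF, FD, DE respectively. Then the lines AA0, BB0, CC0 all pass through the isotomcomplement Q of P; that is, each of the triples {A, A0, Q}, {B, B0, Q}, {C, C0, Q} is collinear. -/
/-!
In barycentric coordinates with respect to `A, B, C`, write `E = (e₀, 0, e₂)`, `F = (f₀, f₁, 0)`
and `P' = (s₀, s₁, s₂)`. Then `E₃ = (e₂, 0, e₀)` and `F₃ = (f₁, f₀, 0)`, so the lines `BE₃` and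
`CF₃` through `P'` say `e₂ (1 - s₁) = s₀ = f₁ (1 - s₂)`. As `Q = ((1 - sᵢ) / 2)ᵢ` and
`A₀ = ((eᵢ + fᵢ) / 2)ᵢ`, this is exactly the vanishing of the determinant expressing that
`A, A₀, Q` are collinear. The other two collinearities are the same statement for the
rotated triangles `BCA` and `CAB`.
-/

open EuclideanGeometry Affine

local notation "Pt" => EuclideanSpace ℝ (Fin 2)

section AffinePlane

variable {k V P : Type*} [Field k] [AddCommGroup V] [Module k V] [AddTorsor V P]

theorem AffineMap.map_pointReflection {V₂ P₂ : Type*} [AddCommGroup V₂] [Module k V₂]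
    [AddTorsor V₂ P₂] (f : P →ᵃ[k] P₂) (x y : P) :
    f (Equiv.pointReflection x y) = Equiv.pointReflection (f x) (f y) := by
  simp [Equiv.pointReflection_apply]

theorem AffineBasis.collinear_iff_det_toMatrix_eq_zero (b : AffineBasis (Fin 3) k P)
    (X Y Z : P) : Collinear k {X, Y, Z} ↔ (b.toMatrix ![X, Y, Z]).det = 0 := by
  have := b.finiteDimensional
  rw [collinear_iff_not_affineIndependent_set, ← not_ne_iff, ← isUnit_iff_ne_zero,
    ← Matrix.isUnit_iff_isUnit_det, b.isUnit_toMatrix_iff, and_iff_left_of_imp]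
  intro h
  rw [h.affineSpan_eq_top_iff_card_eq_finrank_add_one]
  exact b.card_eq_finrank_add_one

theorem centroid_fin_three_eq_smul_add [CharZero k] (A B C : V) :
    Finset.univ.centroid k ![A, B, C] = (1 / 3 : k) • (A + B + C) := by
  rw [Finset.centroid_def, Finset.affineCombination_eq_linear_combination _ _ _
    (Finset.univ.sum_centroidWeights_eq_one_of_nonempty k ⟨0, Finset.mem_univ _⟩)]
  simp [Fin.sum_univ_three, Finset.centroidWeights]

theorem collinear_vertex_midpoint_homothety_centroid [CharZero k]
    (hV : Module.finrank k V = 2) {A B C E F P' : P} (hABC : AffineIndependent k ![A, B, C])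
    (hE : Collinear k {C, A, E}) (hF : Collinear k {A, B, F})
    (hE' : Collinear k {B, Equiv.pointReflection (midpoint k C A) E, P'})
    (hF' : Collinear k {C, Equiv.pointReflection (midpoint k A B) F, P'}) :
    Collinear k {A, midpoint k E F,
      AffineMap.homothety (Finset.univ.centroid k ![A, B, C]) (-1 / 2 : k) P'} := by
  have : FiniteDimensional k V := Module.finite_of_finrank_eq_succ hV
  obtain ⟨b, hb⟩ : ∃ b : AffineBasis (Fin 3) k P, ⇑b = ![A, B, C] :=
    ⟨⟨_, hABC, by rw [hABC.affineSpan_eq_top_iff_card_eq_finrank_add_one, hV]; rfl⟩, rfl⟩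
  obtain rfl : A = b 0 := (congrFun hb 0).symm
  obtain rfl : B = b 1 := (congrFun hb 1).symm
  obtain rfl : C = b 2 := (congrFun hb 2).symm
  rw [← hb]
  simp only [b.collinear_iff_det_toMatrix_eq_zero, Matrix.det_fin_three,
    AffineBasis.toMatrix_apply, Matrix.cons_val_zero, Matrix.cons_val_one, Matrix.cons_val_two,
    Matrix.tail_cons, Matrix.head_cons, AffineMap.map_pointReflection, AffineMap.map_midpoint,
    AffineMap.homothety_eq_lineMap, AffineMap.apply_lineMap,
    b.coord_apply_centroid (Finset.mem_univ _)] at hE hF hE' hF' ⊢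
  simp only [AffineBasis.coord_apply_eq, AffineBasis.coord_apply_ne, ne_eq, Fin.reduceEq,
    not_false_eq_true, mul_one, one_mul, mul_zero, zero_mul, sub_zero, zero_sub, sub_self,
    add_zero, zero_add, mul_neg, neg_zero,
    Equiv.pointReflection_apply, vsub_eq_sub, vadd_eq_add, midpoint_eq_smul_add, invOf_eq_inv,
    smul_eq_mul, Finset.card_univ, Fintype.card_fin, Nat.cast_ofNat,
    AffineMap.lineMap_apply_ring] at hE hF hE' hF' ⊢
  have sE := b.sum_coord_apply_eq_one E
  have sF := b.sum_coord_apply_eq_one F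
  have sP' := b.sum_coord_apply_eq_one P'
  simp only [Fin.sum_univ_three] at sE sF sP'
  have hBE₃ : b.coord 2 E * (1 - b.coord 1 P') = b.coord 0 P' := by
    linear_combination -hE' - b.coord 2 P' * hE + b.coord 2 P' * sE - b.coord 2 E * sP'
  have hCF₃ : b.coord 1 F * (1 - b.coord 2 P') = b.coord 0 P' := by
    linear_combination hF' - b.coord 1 P' * hF + b.coord 1 P' * sF - b.coord 1 F * sP'
  linear_combination (1 / 4 : k) *
    (hCF₃ - hBE₃ + (1 - b.coord 2 P') * hE - (1 - b.coord 1 P') * hF)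

end AffinePlane

theorem stmt_3_general (A B C G D E F D0 E0 F0 D3 E3 F3 P' Q A0 B0 C0 : Pt)
(hABC : AffineIndependent ℝ ![A, B, C])
    (hG : G = (1/3 : ℝ) • (A + B + C))
    (hD : Collinear ℝ {B, C, D})
    (hE : Collinear ℝ {C, A, E})
    (hF : Collinear ℝ {A, B, F})
    (hD0 : D0 = midpoint ℝ B C) (hE0 : E0 = midpoint ℝ C A) (hF0 : F0 = midpoint ℝ A B)
(hD3 : D3 = Equiv.pointReflection D0 D)
    (hE3 : E3 = Equiv.pointReflection E0 E)
    (hF3 : F3 = Equiv.pointReflection F0 F)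
(hP'a : Collinear ℝ {A, D3, P'})
    (hP'b : Collinear ℝ {B, E3, P'})
    (hP'c : Collinear ℝ {C, F3, P'})
    (hQ : Q = AffineMap.homothety G (-1/2 : ℝ) P')
    (hA0 : A0 = midpoint ℝ E F) (hB0 : B0 = midpoint ℝ F D) (hC0 : C0 = midpoint ℝ D E) :
    Collinear ℝ {A, A0, Q} ∧ Collinear ℝ {B, B0, Q} ∧ Collinear ℝ {C, C0, Q} := by
  have hV : Module.finrank ℝ Pt = 2 := finrank_euclideanSpace_fin
  have hG_eq {X Y Z : Pt} (h : X + Y + Z = A + B + C) :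
      G = Finset.univ.centroid ℝ ![X, Y, Z] := by
    rw [centroid_fin_three_eq_smul_add, h, hG]
  have hBCA : AffineIndependent ℝ ![B, C, A] := hABC.comm_left.comm_right
  have hCAB : AffineIndependent ℝ ![C, A, B] := hBCA.comm_left.comm_right
  subst hD0 hE0 hF0 hD3 hE3 hF3 hQ hA0 hB0 hC0
  refine ⟨?_, ?_, ?_⟩
  · rw [hG_eq rfl]
    exact collinear_vertex_midpoint_homothety_centroid hV hABC hE hF hP'b hP'c
  · rw [hG_eq (add_rotate A B C).symm]
    exact collinear_vertex_midpoint_homothety_centroid hV hBCA hF hD hP'c hP'a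
  · rw [hG_eq (add_rotate C A B)]
    exact collinear_vertex_midpoint_homothety_centroid hV hCAB hD hE hP'a hP'b

theorem stmt_3 (A B C G P D E F D0 E0 F0 D3 E3 F3 P' Q A0 B0 C0 : Pt)
(hABC : AffineIndependent ℝ ![A, B, C])
    (hG : G = (1/3 : ℝ) • (A + B + C))
    (hPa : ¬ Collinear ℝ {B, C, P})
    (hPb : ¬ Collinear ℝ {C, A, P})
    (hPc : ¬ Collinear ℝ {A, B, P})
    (hD : Collinear ℝ {B, C, D}) (hDcev : Collinear ℝ {A, P, D})
    (hE : Collinear ℝ {C, A, E}) (hEcev : Collinear ℝ {B, P, E})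
    (hF : Collinear ℝ {A, B, F}) (hFcev : Collinear ℝ {C, P, F})
    (hD0 : D0 = midpoint ℝ B C) (hE0 : E0 = midpoint ℝ C A) (hF0 : F0 = midpoint ℝ A B)
(hD3 : D3 = Equiv.pointReflection D0 D)
    (hE3 : E3 = Equiv.pointReflection E0 E)
    (hF3 : F3 = Equiv.pointReflection F0 F)
(hP'a : Collinear ℝ {A, D3, P'})
    (hP'b : Collinear ℝ {B, E3, P'})
    (hP'c : Collinear ℝ {C, F3, P'})
    (hQ : Q = AffineMap.homothety G (-1/2 : ℝ) P')
    (hA0 : A0 = midpoint ℝ E F) (hB0 : B0 = midpoint ℝ F D) (hC0 : C0 = midpoint ℝ D E) :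
    Collinear ℝ {A, A0, Q} ∧ Collinear ℝ {B, B0, Q} ∧ Collinear ℝ {C, C0, Q} :=
  stmt_3_general A B C G D E F D0 E0 F0 D3 E3 F3 P' Q A0 B0 C0 hABC hG hD hE hF hD0 hE0 hF0 hD3 hE3
    hF3 hP'a hP'b hP'c hQ hA0 hB0 hC0
end

section
/- Let t be a real number with D = B + t·(C − B) (so D divides BC in signed ratio BD/DC = t/(1−t)), and let X = F + t·(E − F) (the point of EF with FX/XE = BD/DC). Let A0 be the midpoint of EF. If X ≠ D and A0 ≠ A, then the line DX is parallel to the line AA0. -/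
/-!
Write `D - A = s • (P - A)`, `F - A = f • (B - A)` and `E - A = e • (C - A)`. Comparing
coefficients in the frame `(A; B - A, C - A)`, the incidences `F ∈ CP` and `E ∈ BP` become
`f * (s - t) = 1 - t` and `e * (s + t - 1) = t` (a form of Ceva's theorem). With these,
`X - D = (1 - t) • (F - B) + t • (E - C)` collapses to `2 * (1 - s) • (A0 - A)`, and the factor
is nonzero because `X ≠ D`.
-/

open EuclideanGeometry Affine

section Affine

variable {k V P : Type*} [Field k] [AddCommGroup V] [Module k V] [AddTorsor V P]

theorem Collinear.exists_vsub_eq_smul_vsub {p₁ p₂ p₃ : P} (h : Collinear k {p₁, p₂, p₃})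
    (h₁₂ : p₁ ≠ p₂) : ∃ r : k, p₃ -ᵥ p₁ = r • (p₂ -ᵥ p₁) := by
  have hp₃ : p₃ ∈ line[k, p₁, p₂] := h.mem_affineSpan_of_mem_of_ne (by simp) (by simp) (by simp) h₁₂
  rw [← vsub_vadd p₃ p₁, vadd_left_mem_affineSpan_pair] at hp₃
  obtain ⟨r, hr⟩ := hp₃
  exact ⟨r, hr.symm⟩

theorem AffineIndependent.linearIndependent_vsub_vsub {p₁ p₂ p₃ : P}
    (h : AffineIndependent k ![p₁, p₂, p₃]) : LinearIndependent k ![p₂ -ᵥ p₁, p₃ -ᵥ p₁] := by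
  rw [affineIndependent_iff_linearIndependent_vsub k _ 0] at h
  convert h.comp (fun i : Fin 2 => (⟨i.succ, i.succ_ne_zero⟩ : {i : Fin 3 // i ≠ 0}))
    (fun i j hij => by simpa using hij) using 1
  · ext i
    fin_cases i <;> rfl
  · rfl

theorem affineSpan_pair_parallel_of_vsub_eq_smul {p₁ p₂ q₁ q₂ : P} {r : k}
    (h : q₂ -ᵥ q₁ = r • (p₂ -ᵥ p₁)) (hq : q₁ ≠ q₂) : line[k, q₁, q₂] ∥ line[k, p₁, p₂] := by
  have hr : r ≠ 0 := by
    rintro rfl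
    exact hq (vsub_eq_zero_iff_eq.mp (by simpa using h)).symm
  rw [AffineSubspace.affineSpan_pair_parallel_iff_vectorSpan_eq, vectorSpan_pair_rev,
    vectorSpan_pair_rev, h]
  exact Submodule.span_singleton_smul_eq (isUnit_iff_ne_zero.mpr hr) _

end Affine

section Cevians

variable {k V : Type*} [Field k] [AddCommGroup V] [Module k V]

theorem cevian_trace_coeff_mul_sub_eq {A B C P F : V} {s t f r : k}
    (hABC : LinearIndependent k ![B - A, C - A])
    (hD : s • (P - A) = (1 - t) • (B - A) + t • (C - A))
    (hF : F - A = f • (B - A)) (hFP : F - C = r • (P - C)) :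
    f * (s - t) = 1 - t := by
  rw [LinearIndependent.pair_iff] at hABC
  have hs : s ≠ 0 := by
    rintro rfl
    have := hABC (1 - t) t (by rw [← hD, zero_smul])
    grind
  obtain ⟨hx, hy⟩ := hABC (s * f - r * (1 - t)) (r * s - r * t - s)
    (by linear_combination (norm := module) s • hFP - s • hF + r • hD)
  apply mul_left_cancel₀ hs
  linear_combination (s - t) * hx + (1 - t) * hy

end Cevians

local notation "Pt" => EuclideanSpace ℝ (Fin 2)

theorem stmt_7_general (A B C P D E F X A0 : Pt) (t : ℝ)
(hABC : AffineIndependent ℝ ![A, B, C])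
    (hPa : ¬ Collinear ℝ {B, C, P})
    (hPb : ¬ Collinear ℝ {C, A, P})
    (hPc : ¬ Collinear ℝ {A, B, P})
    (hDcev : Collinear ℝ {A, P, D})
    (hE : Collinear ℝ {C, A, E}) (hEcev : Collinear ℝ {B, P, E})
    (hF : Collinear ℝ {A, B, F}) (hFcev : Collinear ℝ {C, P, F})
    (ht : D = B + t • (C - B))
    (hX : X = F + t • (E - F))
    (hA0 : A0 = midpoint ℝ E F)
    (hXD : X ≠ D) :
    line[ℝ, D, X] ∥ line[ℝ, A, A0] := by
  have hli := hABC.linearIndependent_vsub_vsub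
  obtain ⟨s, hs⟩ := hDcev.exists_vsub_eq_smul_vsub (ne₁₃_of_not_collinear hPc)
  obtain ⟨f, hf⟩ := hF.exists_vsub_eq_smul_vsub (ne₁₂_of_not_collinear hPc)
  obtain ⟨r, hr⟩ := hFcev.exists_vsub_eq_smul_vsub (ne₁₃_of_not_collinear hPb)
  obtain ⟨e, he⟩ := (Set.insert_comm C A {E} ▸ hE).exists_vsub_eq_smul_vsub
    (ne₁₂_of_not_collinear hPb).symm
  obtain ⟨u, hu⟩ := hEcev.exists_vsub_eq_smul_vsub (ne₁₃_of_not_collinear hPa)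
  simp only [vsub_eq_sub] at hli hs hf hr he hu
  have hsD : s • (P - A) = (1 - t) • (B - A) + t • (C - A) := by
    rw [← hs, ht]
    module
  have hfs := cevian_trace_coeff_mul_sub_eq hli hsD hf hr
  have hes := cevian_trace_coeff_mul_sub_eq (t := 1 - t) (LinearIndependent.pair_symm_iff.mp hli)
    (by rw [hsD]; module) he hu
  have hXD' : X - D = (2 * (1 - s)) • (A0 - A) := by
    rw [hX, ht, hA0, midpoint_eq_smul_add, invOf_eq_inv]
    linear_combination (norm := module)
      (s - t) • hf + (s - 1 + t) • he + hfs • (B - A) + hes • (C - A)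
  exact affineSpan_pair_parallel_of_vsub_eq_smul hXD' hXD.symm

theorem stmt_7 (A B C G P D E F X A0 : Pt) (t : ℝ)
(hABC : AffineIndependent ℝ ![A, B, C])
    (hG : G = (1/3 : ℝ) • (A + B + C))
    (hPa : ¬ Collinear ℝ {B, C, P})
    (hPb : ¬ Collinear ℝ {C, A, P})
    (hPc : ¬ Collinear ℝ {A, B, P})
    (hD : Collinear ℝ {B, C, D}) (hDcev : Collinear ℝ {A, P, D})
    (hE : Collinear ℝ {C, A, E}) (hEcev : Collinear ℝ {B, P, E})
    (hF : Collinear ℝ {A, B, F}) (hFcev : Collinear ℝ {C, P, F})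
    (hD0 : D0 = midpoint ℝ B C) (hE0 : E0 = midpoint ℝ C A) (hF0 : F0 = midpoint ℝ A B)
    (ht : D = B + t • (C - B))
    (hX : X = F + t • (E - F))
    (hA0 : A0 = midpoint ℝ E F)
    (hXD : X ≠ D) (hA0A : A0 ≠ A) :
    line[ℝ, D, X] ∥ line[ℝ, A, A0] :=
  stmt_7_general A B C P D E F X A0 t hABC hPa hPb hPc hDcev hE hEcev hF hFcev ht hX hA0 hXD
end

section
/- (Ehrmann) The affine map T which takes triangle ABC to the cevian triangle DEF of P fixes the isotomcomplement of P: T(Q) = Q. -/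
open EuclideanGeometry Affine

local notation "Pt" => EuclideanSpace ℝ (Fin 2)

/-!
Work in barycentric coordinates `(α : β : γ)` of `P` with respect to `ABC`, normalised by
`α + β + γ = 1`. Three points are collinear iff the determinant of their coordinates vanishes, so
the cevian traces are `D = (0 : β : γ)`, `E = (α : 0 : γ)`, `F = (α : β : 0)`, the isotomic
conjugate is `P' = (βγ : γα : αβ)`, and its complement is
`Q = (α(β + γ) : β(γ + α) : γ(α + β))`. In these coordinates `T` is the matrix whose columns are
the normalised coordinates of `D, E, F`; applied to `Q`, the factors `β + γ, γ + α, α + β` of `Q`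
cancel the normalisations of `D, E, F`, and what remains is `Q` again.
-/

open Finset

theorem Fin.eq_or_eq_add_one_or_eq_add_two (i j : Fin 3) : j = i ∨ j = i + 1 ∨ j = i + 2 := by
  revert i j
  decide

section Ring

variable {k V P : Type*} [Ring k] [AddCommGroup V] [Module k V] [AddTorsor V P]

theorem affineIndependent_iff_linearIndependent_of_sum_eq_one {ι κ : Type*} [Fintype ι]
    [Fintype κ] {p : ι → κ → k} (hp : ∀ i, ∑ j, p i j = 1) :
    AffineIndependent k p ↔ LinearIndependent k p := by
  rw [affineIndependent_iff_of_fintype, Fintype.linearIndependent_iff]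
  refine forall_congr' fun w => ⟨fun h hw => ?_, fun h hw hs => h ?_⟩
  · have hsum : ∑ i, w i = 0 := by
      simpa [sum_comm (γ := κ), ← mul_sum, hp] using
        congr_arg (fun v => ∑ j, v j) hw
    exact h hsum (by rwa [weightedVSub_eq_linear_combination _ hsum])
  · rwa [← weightedVSub_eq_linear_combination _ hw]

theorem AffineBasis.apply_eq_sum_coord_mul {ι : Type*} [Fintype ι] (b : AffineBasis ι k P)
    (f : P →ᵃ[k] k) (X : P) : f X = ∑ i, b.coord i X * f (b i) := by
  conv_lhs => rw [← b.affineCombination_coord_eq_self X]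
  rw [map_affineCombination _ _ _ (b.sum_coord_apply_eq_one X),
    affineCombination_eq_linear_combination _ _ _ (b.sum_coord_apply_eq_one X)]
  rfl

end Ring

section CommRing

variable {k V P : Type*} [CommRing k] [AddCommGroup V] [Module k V] [AddTorsor V P]

theorem AffineMap.apply_pointReflection_midpoint [Invertible (2 : k)] (f : P →ᵃ[k] k)
    (A C D : P) : f (Equiv.pointReflection (midpoint k A C) D) = f A + f C - f D := by
  rw [Equiv.pointReflection_apply, AffineMap.map_vadd, AffineMap.linearMap_vsub,
    AffineMap.map_midpoint, midpoint_eq_smul_add, vadd_eq_add, vsub_eq_sub, smul_eq_mul]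
  linear_combination (f A + f C) * mul_invOf_self (2 : k)

theorem AffineBasis.coord_add_coord_add_coord (b : AffineBasis (Fin 3) k P) (i : Fin 3) (X : P) :
    b.coord i X + b.coord (i + 1) X + b.coord (i + 2) X = 1 := by
  have h := b.sum_coord_apply_eq_one X
  rw [Fin.sum_univ_three] at h
  fin_cases i <;> simp only [Fin.zero_eta, Fin.mk_one, Fin.reduceFinMk, Fin.isValue, Fin.reduceAdd,
    zero_add] <;> linear_combination h

end CommRing

section Field

variable {k V P : Type*} [Field k] [AddCommGroup V] [Module k V] [AddTorsor V P]

namespace AffineBasis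

variable (b : AffineBasis (Fin 3) k P)

theorem collinear_iff_det_coords_eq_zero (X Y Z : P) :
    Collinear k {X, Y, Z} ↔ (Matrix.of ![b.coords X, b.coords Y, b.coords Z]).det = 0 := by
  have hinj : Function.Injective b.coords := fun X Y h => b.ext_elem fun i => congr_fun h i
  have hrows : b.coords ∘ ![X, Y, Z] = (Matrix.of ![b.coords X, b.coords Y, b.coords Z]).row := by
    funext i; fin_cases i <;> rfl
  rw [collinear_iff_not_affineIndependent_set, ← b.coords.affineIndependent_iff hinj, hrows,
    affineIndependent_iff_linearIndependent_of_sum_eq_one, Matrix.linearIndependent_rows_iff_isUnit,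
    Matrix.isUnit_iff_isUnit_det, isUnit_iff_ne_zero, not_not]
  intro i; fin_cases i <;> exact b.sum_coord_apply_eq_one _

theorem collinear_vertices_iff (i : Fin 3) (X : P) :
    Collinear k {b (i + 1), b (i + 2), X} ↔ b.coord i X = 0 := by
  rw [b.collinear_iff_det_coords_eq_zero, Matrix.det_fin_three]
  fin_cases i <;> simp [coords_apply]

theorem collinear_vertex_iff (i : Fin 3) (X Y : P) :
    Collinear k {b i, X, Y} ↔
      b.coord (i + 1) X * b.coord (i + 2) Y = b.coord (i + 2) X * b.coord (i + 1) Y := by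
  rw [b.collinear_iff_det_coords_eq_zero, Matrix.det_fin_three,
    ← sub_eq_zero (a := b.coord (i + 1) X * b.coord (i + 2) Y)]
  fin_cases i <;> simp [coords_apply, neg_add_eq_sub]

variable {b}

theorem coord_cevianTrace {i : Fin 3} {X D : P} (hside : Collinear k {b (i + 1), b (i + 2), D})
    (hcev : Collinear k {b i, X, D}) (j : Fin 3) :
    (1 - b.coord i X) * b.coord j D = if j = i then 0 else b.coord j X := by
  rw [b.collinear_vertices_iff] at hside
  rw [b.collinear_vertex_iff] at hcev
  have hX := b.coord_add_coord_add_coord i X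
  have hD := b.coord_add_coord_add_coord i D
  obtain rfl | rfl | rfl := Fin.eq_or_eq_add_one_or_eq_add_two i j
  · simp [hside]
  · rw [if_neg (by simp)]
    linear_combination -b.coord (i + 1) D * hX - hcev + b.coord (i + 1) X * hD
      - b.coord (i + 1) X * hside
  · rw [if_neg (by simp)]
    linear_combination -b.coord (i + 2) D * hX + hcev + b.coord (i + 2) X * hD
      - b.coord (i + 2) X * hside

theorem coord_mul_coord_eq_of_isotomic [Invertible (2 : k)] {i : Fin 3} {X D X' : P}
    (hside : Collinear k {b (i + 1), b (i + 2), D}) (hcev : Collinear k {b i, X, D})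
    (hX' : Collinear k {b i, Equiv.pointReflection (midpoint k (b (i + 1)) (b (i + 2))) D, X'}) :
    b.coord (i + 1) X * b.coord (i + 1) X' = b.coord (i + 2) X * b.coord (i + 2) X' := by
  rw [b.collinear_vertex_iff, AffineMap.apply_pointReflection_midpoint,
    AffineMap.apply_pointReflection_midpoint] at hX'
  have h1 := coord_cevianTrace hside hcev (i + 1)
  have h2 := coord_cevianTrace hside hcev (i + 2)
  have hX := b.coord_add_coord_add_coord i X
  simp only [coord_apply_eq, coord_apply_ne, ne_eq, add_eq_left, add_right_inj, one_ne_zero,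
    Fin.reduceEq, Fin.isValue, not_false_eq_true, add_zero, zero_add, reduceIte] at hX' h1 h2
  linear_combination -(1 - b.coord i X) * hX' - (b.coord (i + 2) X' - b.coord (i + 1) X') * hX
    - b.coord (i + 2) X' * h1 + b.coord (i + 1) X' * h2

theorem coord_isotomicConjugate [Invertible (2 : k)] {X X' : P} {D : Fin 3 → P}
    (hside : ∀ i, Collinear k {b (i + 1), b (i + 2), D i}) (hcev : ∀ i, Collinear k {b i, X, D i})
    (hX' : ∀ i, Collinear k
      {b i, Equiv.pointReflection (midpoint k (b (i + 1)) (b (i + 2))) (D i), X'})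
    (j : Fin 3) :
    (b.coord 0 X * b.coord 1 X + b.coord 1 X * b.coord 2 X + b.coord 2 X * b.coord 0 X) *
      b.coord j X' = b.coord (j + 1) X * b.coord (j + 2) X := by
  have h : ∀ i, b.coord (i + 1) X * b.coord (i + 1) X' = b.coord (i + 2) X * b.coord (i + 2) X' :=
    fun i => coord_mul_coord_eq_of_isotomic (hside i) (hcev i) (hX' i)
  have h0 := h 0
  have h1 := h 1
  have h2 := h 2
  have hsum := b.sum_coord_apply_eq_one X'
  rw [Fin.sum_univ_three] at hsum
  simp only [Fin.isValue, zero_add, Fin.reduceAdd] at h0 h1 h2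
  fin_cases j <;> simp only [Fin.zero_eta, Fin.mk_one, Fin.reduceFinMk, Fin.isValue, Fin.reduceAdd,
    zero_add]
  · linear_combination -b.coord 1 X * h1 + b.coord 2 X * h2 + b.coord 1 X * b.coord 2 X * hsum
  · linear_combination b.coord 0 X * h0 - b.coord 2 X * h2 + b.coord 0 X * b.coord 2 X * hsum
  · linear_combination b.coord 1 X * h1 - b.coord 0 X * h0 + b.coord 0 X * b.coord 1 X * hsum

open AffineMap in
theorem apply_isotomcomplement_eq_self [CharZero k] (T : P →ᵃ[k] P) {X X' : P}
    (hX : ∀ i, b.coord i X ≠ 0)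
    (hside : ∀ i, Collinear k {b (i + 1), b (i + 2), T (b i)})
    (hcev : ∀ i, Collinear k {b i, X, T (b i)})
    (hX' : ∀ i, Collinear k
      {b i, Equiv.pointReflection (midpoint k (b (i + 1)) (b (i + 2))) (T (b i)), X'}) :
    T (homothety (univ.centroid k b) (-1 / 2 : k) X') =
      homothety (univ.centroid k b) (-1 / 2 : k) X' := by
  set Q := homothety (univ.centroid k b) (-1 / 2 : k) X'
  set σ := b.coord 0 X * b.coord 1 X + b.coord 1 X * b.coord 2 X + b.coord 2 X * b.coord 0 X
  have hX'σ := coord_isotomicConjugate hside hcev hX'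
  have hσ : σ ≠ 0 := left_ne_zero_of_mul (hX'σ 0 ▸ mul_ne_zero (hX _) (hX _))
  have hQ : ∀ j, 2 * σ * b.coord j Q = b.coord j X * (1 - b.coord j X) := by
    intro j
    have hσj : σ = b.coord j X * b.coord (j + 1) X + b.coord (j + 1) X * b.coord (j + 2) X
        + b.coord (j + 2) X * b.coord j X := by
      fin_cases j <;> simp only [σ, Fin.zero_eta, Fin.mk_one, Fin.reduceFinMk, Fin.isValue,
        Fin.reduceAdd, zero_add] <;> ring
    rw [show Q = lineMap _ X' (-1 / 2 : k) from homothety_eq_lineMap _ _ _, apply_lineMap,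
      b.coord_apply_centroid (mem_univ j), lineMap_apply_ring']
    simp only [card_univ, Fintype.card_fin]
    linear_combination hσj - hX'σ j + b.coord j X * b.coord_add_coord_add_coord j X
  have hTQ : ∀ m, b.coord m (T Q) = ∑ j, b.coord j Q * b.coord m (T (b j)) :=
    fun m => b.apply_eq_sum_coord_mul ((b.coord m).comp T) Q
  refine b.ext_elem fun m => mul_left_cancel₀ (mul_ne_zero two_ne_zero hσ) ?_
  calc 2 * σ * b.coord m (T Q)
      = ∑ j, b.coord j X * ((1 - b.coord j X) * b.coord m (T (b j))) := by
        rw [hTQ, mul_sum]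
        exact sum_congr rfl fun j _ => by rw [← mul_assoc, hQ j, mul_assoc]
    _ = ∑ j, b.coord j X * if m = j then 0 else b.coord m X := by
        simp_rw [coord_cevianTrace (hside _) (hcev _)]
    _ = b.coord m X * (1 - b.coord m X) := by
        have hsum := b.sum_coord_apply_eq_one X
        rw [Fin.sum_univ_three] at hsum ⊢
        fin_cases m <;> simp only [Fin.zero_eta, Fin.mk_one, Fin.reduceFinMk, Fin.isValue,
          Fin.reduceEq, reduceIte, mul_zero, add_zero, zero_add]
        · linear_combination b.coord 0 X * hsum
        · linear_combination b.coord 1 X * hsum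
        · linear_combination b.coord 2 X * hsum
    _ = 2 * σ * b.coord m Q := (hQ m).symm

end AffineBasis

end Field

theorem stmt_8 (A B C G P D E F D0 E0 F0 D3 E3 F3 P' Q : Pt) (T : Pt →ᵃ[ℝ] Pt)
(hABC : AffineIndependent ℝ ![A, B, C])
    (hG : G = (1/3 : ℝ) • (A + B + C))
    (hPa : ¬ Collinear ℝ {B, C, P})
    (hPb : ¬ Collinear ℝ {C, A, P})
    (hPc : ¬ Collinear ℝ {A, B, P})
    (hD : Collinear ℝ {B, C, D}) (hDcev : Collinear ℝ {A, P, D})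
    (hE : Collinear ℝ {C, A, E}) (hEcev : Collinear ℝ {B, P, E})
    (hF : Collinear ℝ {A, B, F}) (hFcev : Collinear ℝ {C, P, F})
    (hD0 : D0 = midpoint ℝ B C) (hE0 : E0 = midpoint ℝ C A) (hF0 : F0 = midpoint ℝ A B)
(hD3 : D3 = Equiv.pointReflection D0 D)
    (hE3 : E3 = Equiv.pointReflection E0 E)
    (hF3 : F3 = Equiv.pointReflection F0 F)
(hP'a : Collinear ℝ {A, D3, P'})
    (hP'b : Collinear ℝ {B, E3, P'})
    (hP'c : Collinear ℝ {C, F3, P'})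
    (hQ : Q = AffineMap.homothety G (-1/2 : ℝ) P')
    (hTA : T A = D) (hTB : T B = E) (hTC : T C = F) :
    T Q = Q := by
  obtain ⟨b, rfl, rfl, rfl⟩ : ∃ b : AffineBasis (Fin 3) ℝ Pt, b 0 = A ∧ b 1 = B ∧ b 2 = C :=
    ⟨⟨![A, B, C], hABC, hABC.affineSpan_eq_top_iff_card_eq_finrank_add_one.mpr (by simp)⟩,
      rfl, rfl, rfl⟩
  have hG' : G = univ.centroid ℝ b := by
    rw [hG, centroid_def, affineCombination_eq_linear_combination _ _ _
      (sum_centroidWeights_eq_one_of_card_ne_zero _ _ (by simp))]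
    simp [Fin.sum_univ_three, smul_add]
  subst hD0 hE0 hF0 hD3 hE3 hF3 hTA hTB hTC hQ hG'
  refine b.apply_isotomcomplement_eq_self T (X := P) (fun i => ?_) (fun i => ?_) (fun i => ?_)
    (fun i => ?_)
  all_goals fin_cases i
  exacts [mt (b.collinear_vertices_iff 0 P).2 hPa, mt (b.collinear_vertices_iff 1 P).2 hPb,
    mt (b.collinear_vertices_iff 2 P).2 hPc, hD, hE, hF, hDcev, hEcev, hFcev, hP'a, hP'b, hP'c]
end

section
/- Let G' be the centroid of D, E, F. Then Q is the image of T(P') under the homothety with center G' and ratio -1/2; that is, Q is the complement of T(P') with respect to the triangle DEF. -/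
open EuclideanGeometry Affine

local notation "Pt" => EuclideanSpace ℝ (Fin 2)

/-!
Write `P = x A + y B + z C` in barycentric coordinates. Then `D = (0 : y : z)`, `E = (x : 0 : z)`,
`F = (x : y : 0)`, the isotomic conjugate is `P' = (yz : zx : xy)` and its complement is
`Q = (x(y+z) : y(z+x) : z(x+y))`. An affine map sends the centroid of `ABC` to that of `DEF` and
commutes with homotheties, so the complement of `T P'` in `DEF` is `T (K P') = T Q`: the claim
is that `T` fixes `Q`. In `T Q = q_A D + q_B E + q_C F` the factor `y + z` of `q_A` cancels the
denominator of `D = (yB + zC)/(y + z)`, and likewise for `E` and `F`, so the coefficient of `A`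
in `T Q` is proportional to `yx + zx`, that of `B` to `xy + zy`, and that of `C` to `xz + yz`.
-/

section
variable {k V : Type*} [Field k] [AddCommGroup V] [Module k V]

theorem AffineIndependent.coeffs_eq_of_smul_add_smul_add_smul_eq {A B C : V}
    (h : AffineIndependent k ![A, B, C]) {a b c a' b' c' : k}
    (hs : a + b + c = a' + b' + c')
    (he : a • A + b • B + c • C = a' • A + b' • B + c' • C) :
    a = a' ∧ b = b' ∧ c = c' := by
  have hw := h.eq_zero_of_sum_eq_zero (s := Finset.univ) (w := ![a - a', b - b', c - c'])
    (by simp only [Fin.sum_univ_three, Matrix.cons_val]; linear_combination hs)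
    (by simp only [Fin.sum_univ_three, Matrix.cons_val, sub_smul]
        linear_combination (norm := module) he)
  exact ⟨sub_eq_zero.1 (hw 0 (by simp)), sub_eq_zero.1 (hw 1 (by simp)),
    sub_eq_zero.1 (hw 2 (by simp))⟩

theorem AffineIndependent.ne_smul_add_smul {A B C : V} (h : AffineIndependent k ![A, B, C])
    {b c : k} (hbc : b + c = 1) : A ≠ b • B + c • C := fun hA =>
  one_ne_zero (h.coeffs_eq_of_smul_add_smul_add_smul_eq (a := 1) (b := 0) (c := 0)
    (a' := 0) (b' := b) (c' := c) (by linear_combination -hbc)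
    (by rw [zero_smul, zero_smul, add_zero, add_zero, one_smul, hA]; module)).1

theorem AffineIndependent.rotate_three {A B C : V} (h : AffineIndependent k ![A, B, C]) :
    AffineIndependent k ![B, C, A] := by
  rw [affineIndependent_iff_not_collinear_set] at h ⊢
  rwa [Set.pair_comm C A, Set.insert_comm B A]

theorem AffineIndependent.exists_eq_smul_add_smul_add_smul [FiniteDimensional k V]
    (hV : Module.finrank k V = 2) {A B C : V} (h : AffineIndependent k ![A, B, C]) (P : V) :
    ∃ x y z : k, x + y + z = 1 ∧ P = x • A + y • B + z • C := by
  have hspan : affineSpan k (Set.range ![A, B, C]) = ⊤ := by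
    rw [h.affineSpan_eq_top_iff_card_eq_finrank_add_one, hV]
    rfl
  obtain ⟨w, hw, hP⟩ :=
    eq_affineCombination_of_mem_affineSpan_of_fintype (p1 := P)
      (hspan ▸ AffineSubspace.mem_top _ _ _)
  refine ⟨w 0, w 1, w 2, by simpa [Fin.sum_univ_three] using hw, ?_⟩
  rw [hP, Finset.affineCombination_eq_linear_combination _ _ _ hw]
  simp [Fin.sum_univ_three]

theorem Collinear.exists_eq_smul_add_smul {X Y Z : V} (h : Collinear k {X, Y, Z}) (hXY : X ≠ Y) :
    ∃ t : k, Z = (1 - t) • X + t • Y := by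
  obtain ⟨t, ht⟩ := mem_affineSpan_pair_iff_exists_lineMap_eq.1
    (h.mem_affineSpan_of_mem_of_ne (by simp) (by simp) (show Z ∈ _ by simp) hXY)
  exact ⟨t, by rw [← ht, AffineMap.lineMap_apply_module]⟩

theorem AffineMap.apply_smul_add_smul_add_smul {W : Type*} [AddCommGroup W] [Module k W]
    (T : V →ᵃ[k] W) {a b c : k} (h : a + b + c = 1) (A B C : V) :
    T (a • A + b • B + c • C) = a • T A + b • T B + c • T C := by
  have hT : ∀ X, T X = T.linear X + T 0 := fun X => congrFun T.decomp X
  rw [hT, hT A, hT B, hT C, map_add, map_add, map_smul, map_smul, map_smul]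
  linear_combination (norm := module) h • (-T 0)

theorem AffineMap.apply_homothety {P₁ P₂ W : Type*} [AddCommGroup W] [Module k W]
    [AddTorsor V P₁] [AddTorsor W P₂] (T : P₁ →ᵃ[k] P₂) (c p : P₁) (r : k) :
    T (AffineMap.homothety c r p) = AffineMap.homothety (T c) r (T p) := by
  simp only [AffineMap.homothety_eq_lineMap, AffineMap.apply_lineMap]

theorem pointReflection_midpoint_inv_smul_add_smul [Invertible (2 : k)] {B C : V} {y z : k}
    (h : y + z ≠ 0) :
    Equiv.pointReflection (midpoint k B C) ((y + z)⁻¹ • (y • B + z • C)) =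
      (y + z)⁻¹ • (z • B + y • C) := by
  rw [Equiv.pointReflection_apply, vsub_eq_sub, vadd_eq_add, sub_add_eq_add_sub,
    midpoint_add_self]
  match_scalars <;> (field_simp; ring)

theorem coeff_ne_zero_of_not_collinear {A B C P : V} {x y z : k} (hxyz : x + y + z = 1)
    (hP : P = x • A + y • B + z • C) (hBCP : ¬ Collinear k {B, C, P}) : x ≠ 0 := by
  rintro rfl
  refine hBCP (collinear_triple_of_mem_affineSpan_pair (left_mem_affineSpan_pair k B C)
    (right_mem_affineSpan_pair k B C) (mem_affineSpan_pair_iff_exists_lineMap_eq.2 ⟨z, ?_⟩))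
  rw [AffineMap.lineMap_apply_module, hP, show 1 - z = y by linear_combination -hxyz]
  module

theorem cevian_trace_eq {A B C P D : V} {x y z : k} (hABC : AffineIndependent k ![A, B, C])
    (hxyz : x + y + z = 1) (hP : P = x • A + y • B + z • C) (hAP : A ≠ P)
    (hD : Collinear k {B, C, D}) (hAD : Collinear k {A, P, D}) :
    y + z ≠ 0 ∧ D = (y + z)⁻¹ • (y • B + z • C) := by
  obtain ⟨t, ht⟩ :=
    hD.exists_eq_smul_add_smul (hABC.injective.ne (by decide : (1 : Fin 3) ≠ 2))
  obtain ⟨s, hs⟩ := hAD.exists_eq_smul_add_smul hAP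
  subst hP
  obtain ⟨hA, hB, hC⟩ := hABC.coeffs_eq_of_smul_add_smul_add_smul_eq
    (a := 1 - s + s * x) (b := s * y) (c := s * z) (a' := 0) (b' := 1 - t) (c' := t)
    (by linear_combination s * hxyz) (by linear_combination (norm := module) hs.symm.trans ht)
  have hsyz : s * (y + z) = 1 := by linear_combination s * hxyz - hA
  have hyz : y + z ≠ 0 := right_ne_zero_of_mul_eq_one hsyz
  refine ⟨hyz, ?_⟩
  rw [ht, ← hB, ← hC, eq_inv_of_mul_eq_one_left hsyz]
  module

theorem exists_isotomicConjugate_eq {A B C P' : V} {x y z : k}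
    (hABC : AffineIndependent k ![A, B, C]) (hx : x ≠ 0) (hyz : y + z ≠ 0) (hzx : z + x ≠ 0)
    (hA : Collinear k {A, (y + z)⁻¹ • (z • B + y • C), P'})
    (hB : Collinear k {B, (z + x)⁻¹ • (x • C + z • A), P'}) :
    ∃ c : k, c * (x * y + y * z + z * x) = 1 ∧
      P' = (c * (y * z)) • A + (c * (z * x)) • B + (c * (x * y)) • C := by
  have hAD : A ≠ (y + z)⁻¹ • (z • B + y • C) := by
    rw [smul_add, smul_smul, smul_smul]
    exact hABC.ne_smul_add_smul (by field_simp; ring)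
  have hBE : B ≠ (z + x)⁻¹ • (x • C + z • A) := by
    rw [smul_add, smul_smul, smul_smul]
    exact hABC.rotate_three.ne_smul_add_smul (by field_simp; ring)
  obtain ⟨u, hu⟩ := hA.exists_eq_smul_add_smul hAD
  obtain ⟨v, hv⟩ := hB.exists_eq_smul_add_smul hBE
  obtain ⟨ha, -, hc⟩ := hABC.coeffs_eq_of_smul_add_smul_add_smul_eq
    (a := 1 - u) (b := u * (y + z)⁻¹ * z) (c := u * (y + z)⁻¹ * y)
    (a' := v * (z + x)⁻¹ * z) (b' := 1 - v) (c' := v * (z + x)⁻¹ * x)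
    (by field_simp; ring) (by linear_combination (norm := module) hu.symm.trans hv)
  set α := u * (y + z)⁻¹
  have hα : u = α * (y + z) := (inv_mul_cancel_right₀ hyz u).symm
  have hασ : α * (x * y + y * z + z * x) = x := by
    linear_combination (-x) * (ha + hα) + z * hc
  refine ⟨α / x, by field_simp; linear_combination hασ, ?_⟩
  rw [hu, hα]
  match_scalars
  · field_simp
    linear_combination -hασ
  · field_simp
  · field_simp

theorem AffineMap.apply_isotomcomplement_eq_self (T : V →ᵃ[k] V) {A B C : V} {x y z c : k}
    (hyz : y + z ≠ 0) (hzx : z + x ≠ 0) (hxy : x + y ≠ 0)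
    (hc : c * (x * (y + z) + y * (z + x) + z * (x + y)) = 1)
    (hTA : T A = (y + z)⁻¹ • (y • B + z • C))
    (hTB : T B = (z + x)⁻¹ • (z • C + x • A))
    (hTC : T C = (x + y)⁻¹ • (x • A + y • B)) :
    T ((c * (x * (y + z))) • A + (c * (y * (z + x))) • B + (c * (z * (x + y))) • C) =
      (c * (x * (y + z))) • A + (c * (y * (z + x))) • B + (c * (z * (x + y))) • C := by
  rw [T.apply_smul_add_smul_add_smul (by linear_combination hc), hTA, hTB, hTC]
  match_scalars
  · field_simp
    ring
  · field_simp
  · field_simp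

theorem homothety_centroid_isotomicConjugate [CharZero k] {A B C : V} {x y z c : k}
    (hc : c * (x * y + y * z + z * x) = 1) :
    AffineMap.homothety ((1 / 3 : k) • (A + B + C)) (-1 / 2 : k)
        ((c * (y * z)) • A + (c * (z * x)) • B + (c * (x * y)) • C) =
      (c / 2 * (x * (y + z))) • A + (c / 2 * (y * (z + x))) • B +
        (c / 2 * (z * (x + y))) • C := by
  rw [AffineMap.homothety_apply, vsub_eq_sub, vadd_eq_add]
  match_scalars <;> linear_combination (-1 / 2 : k) * hc

end

theorem stmt_9_general (A B C G P D E F D0 E0 D3 E3 P' Q G' : Pt) (T : Pt →ᵃ[ℝ] Pt)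
(hABC : AffineIndependent ℝ ![A, B, C])
    (hG : G = (1/3 : ℝ) • (A + B + C))
    (hPa : ¬ Collinear ℝ {B, C, P})
    (hPc : ¬ Collinear ℝ {A, B, P})
    (hD : Collinear ℝ {B, C, D}) (hDcev : Collinear ℝ {A, P, D})
    (hE : Collinear ℝ {C, A, E}) (hEcev : Collinear ℝ {B, P, E})
    (hF : Collinear ℝ {A, B, F}) (hFcev : Collinear ℝ {C, P, F})
    (hD0 : D0 = midpoint ℝ B C) (hE0 : E0 = midpoint ℝ C A)
(hD3 : D3 = Equiv.pointReflection D0 D)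
    (hE3 : E3 = Equiv.pointReflection E0 E)
(hP'a : Collinear ℝ {A, D3, P'})
    (hP'b : Collinear ℝ {B, E3, P'})
    (hQ : Q = AffineMap.homothety G (-1/2 : ℝ) P')
    (hTA : T A = D) (hTB : T B = E) (hTC : T C = F)
    (hG' : G' = (1/3 : ℝ) • (D + E + F)) :
    Q = AffineMap.homothety G' (-1/2 : ℝ) (T P') := by
  obtain ⟨x, y, z, hxyz, hP⟩ :=
    hABC.exists_eq_smul_add_smul_add_smul finrank_euclideanSpace_fin P
  have hx : x ≠ 0 := coeff_ne_zero_of_not_collinear hxyz hP hPa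
  obtain ⟨hyz, hD'⟩ := cevian_trace_eq hABC hxyz hP (ne₁₃_of_not_collinear hPc) hD hDcev
  obtain ⟨hzx, hE'⟩ := cevian_trace_eq (x := y) (y := z) (z := x) hABC.rotate_three
    (by linear_combination hxyz) (by rw [hP]; abel) (ne₁₃_of_not_collinear hPa) hE hEcev
  obtain ⟨hxy, hF'⟩ := cevian_trace_eq (x := z) (y := x) (z := y) hABC.rotate_three.rotate_three
    (by linear_combination hxyz) (by rw [hP]; abel) (ne₂₃_of_not_collinear hPa) hF hFcev
  rw [hD3, hD0, hD', pointReflection_midpoint_inv_smul_add_smul hyz] at hP'a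
  rw [hE3, hE0, hE', pointReflection_midpoint_inv_smul_add_smul hzx] at hP'b
  obtain ⟨c, hc, hP'⟩ := exists_isotomicConjugate_eq hABC hx hyz hzx hP'a hP'b
  have hTQ : T Q = Q := by
    rw [hQ, hG, hP', homothety_centroid_isotomicConjugate hc]
    exact T.apply_isotomcomplement_eq_self hyz hzx hxy (by linear_combination hc)
      (hTA.trans hD') (hTB.trans hE') (hTC.trans hF')
  have hTG : T G = G' := by
    simp only [hG, hG', smul_add]
    rw [T.apply_smul_add_smul_add_smul (by norm_num), hTA, hTB, hTC]
  rw [← hTQ, hQ, T.apply_homothety, hTG]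

theorem stmt_9 (A B C G P D E F D0 E0 F0 D3 E3 F3 P' Q G' : Pt) (T : Pt →ᵃ[ℝ] Pt)
(hABC : AffineIndependent ℝ ![A, B, C])
    (hG : G = (1/3 : ℝ) • (A + B + C))
    (hPa : ¬ Collinear ℝ {B, C, P})
    (hPb : ¬ Collinear ℝ {C, A, P})
    (hPc : ¬ Collinear ℝ {A, B, P})
    (hD : Collinear ℝ {B, C, D}) (hDcev : Collinear ℝ {A, P, D})
    (hE : Collinear ℝ {C, A, E}) (hEcev : Collinear ℝ {B, P, E})
    (hF : Collinear ℝ {A, B, F}) (hFcev : Collinear ℝ {C, P, F})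
    (hD0 : D0 = midpoint ℝ B C) (hE0 : E0 = midpoint ℝ C A) (hF0 : F0 = midpoint ℝ A B)
(hD3 : D3 = Equiv.pointReflection D0 D)
    (hE3 : E3 = Equiv.pointReflection E0 E)
    (hF3 : F3 = Equiv.pointReflection F0 F)
(hP'a : Collinear ℝ {A, D3, P'})
    (hP'b : Collinear ℝ {B, E3, P'})
    (hP'c : Collinear ℝ {C, F3, P'})
    (hQ : Q = AffineMap.homothety G (-1/2 : ℝ) P')
    (hTA : T A = D) (hTB : T B = E) (hTC : T C = F)
    (hG' : G' = (1/3 : ℝ) • (D + E + F)) :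
    Q = AffineMap.homothety G' (-1/2 : ℝ) (T P') :=
  stmt_9_general A B C G P D E F D0 E0 D3 E3 P' Q G' T hABC hG hPa hPc hD hDcev hE hEcev hF hFcev
    hD0 hE0 hD3 hE3 hP'a hP'b hQ hTA hTB hTC hG'
end

section
/- Let e and f be real numbers with e ∉ {0,1}, f ∉ {0,1}, and set E = A + e·(C − A) and F = A + f·(B − A). If e + f ≠ 0, then the point A* = E + (e/(e+f))·(F − E) is collinear with A and G. (This expresses that the trace A* of the median AG on line EF divides EF in the signed ratio EA*/A*F = (AE/AF)·(AB/AC).) -/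
open EuclideanGeometry Affine

local notation "Pt" => EuclideanSpace ℝ (Fin 2)

/-! Measured from `A`, the point `A*` is `ef/(e+f) • ((B - A) + (C - A))`, and `(B - A) + (C - A)`
is `3 • (G - A)`; so `A*` lies on the line `AG`, at parameter `3ef/(e+f)`. -/

theorem trace_eq_lineMap_centroid {𝕜 V : Type*} [Field 𝕜] [CharZero 𝕜] [AddCommGroup V]
    [Module 𝕜 V] (A B C : V) {e f : 𝕜} (hef : e + f ≠ 0) :
    A + e • (C - A) + (e / (e + f)) • (A + f • (B - A) - (A + e • (C - A))) =
      AffineMap.lineMap A ((1 / 3 : 𝕜) • (A + B + C)) (3 * e * f / (e + f)) := by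
  rw [AffineMap.lineMap_apply_module']
  match_scalars <;> field_simp <;> ring

theorem stmt_10_general (A B C G E F Ast : Pt) (e f : ℝ)
    (hG : G = (1/3 : ℝ) • (A + B + C))
    (hE : E = A + e • (C - A)) (hF : F = A + f • (B - A))
    (hef : e + f ≠ 0)
    (hAst : Ast = E + (e / (e + f)) • (F - E)) :
    Collinear ℝ {A, G, Ast} := by
  subst hG hE hF hAst
  rw [trace_eq_lineMap_centroid A B C hef, Set.pair_comm, Set.insert_comm]
  exact collinear_insert_of_mem_affineSpan_pair (AffineMap.lineMap_mem_affineSpan_pair _ _ _)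

theorem stmt_10 (A B C G E F Ast : Pt) (e f : ℝ)
    (hABC : AffineIndependent ℝ ![A, B, C])
    (hG : G = (1/3 : ℝ) • (A + B + C))
    (he0 : e ≠ 0) (he1 : e ≠ 1) (hf0 : f ≠ 0) (hf1 : f ≠ 1)
    (hE : E = A + e • (C - A)) (hF : F = A + f • (B - A))
    (hef : e + f ≠ 0)
    (hAst : Ast = E + (e / (e + f)) • (F - E)) :
    Collinear ℝ {A, G, Ast} :=
  stmt_10_general A B C G E F Ast e f hG hE hF hef hAst
end

section
/- (Collinearity Theorem) Let Q' = K(P); let D2 be a point on line BC with A, Q, D2 collinear, and D4 a point on line BC with A, Q', D4 collinear. Then the following collinearities hold: {A, Q', T(D)} is collinear, {A, P, T(D4)} is collinear, {A, Q, T(D0)} is collinear, and {A, G, T(D2)} is collinear. -/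
/-!
Work in homogeneous barycentric coordinates with respect to `A, B, C`. If `P = (x : y : z)`, its
cevian triangle is `D = (0 : y : z)`, `E = (x : 0 : z)`, `F = (x : y : 0)`, the isotomic conjugate
is `P' = (yz : zx : xy)`, and the complement map sends `(a : b : c)` to `(b + c : c + a : a + b)`.
On the line `BC` the affine map `T` is determined by `T B = E` and `T C = F`. Two points are
collinear with `A` exactly when the `2 × 2` determinant of their `B`- and `C`-coordinates
vanishes, and each of the four collinearities becomes such a determinant identity.
-/

section Barycentric

variable {k V : Type*} [Field k] [AddCommGroup V] [Module k V]

/-- The point with homogeneous barycentric coordinates `(a : b : c)`; it is `0` when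
`a + b + c = 0`. -/
def bary (A B C : V) (a b c : k) : V := (a + b + c)⁻¹ • (a • A + b • B + c • C)

variable {A B C X Y : V} {a b c a' b' c' : k}

lemma bary_rotate : bary B C A b c a = bary A B C a b c := by
  unfold bary
  congr 1
  · ring
  · abel

lemma bary_mul {m : k} (hm : m ≠ 0) : bary A B C (m * a) (m * b) (m * c) = bary A B C a b c := by
  rw [bary, bary, ← mul_add, ← mul_add, mul_inv]
  match_scalars <;> field_simp

lemma bary_zero_zero_one : bary A B C (0 : k) 0 1 = C := by simp [bary]

lemma smul_bary_sub (hs : a + b + c ≠ 0) :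
    (a + b + c) • (bary A B C a b c - A) = b • (B - A) + c • (C - A) := by
  rw [bary, smul_sub, smul_inv_smul₀ hs]
  module

lemma bary_eq_smul_add (hs : a + b + c ≠ 0) :
    bary A B C a b c = (a + b + c)⁻¹ • (b • (B - A) + c • (C - A)) + A := by
  rw [← smul_bary_sub hs, inv_smul_smul₀ hs, sub_add_cancel]

lemma lineMap_eq_bary (t : k) : AffineMap.lineMap B C t = bary A B C 0 (1 - t) t := by
  simp [bary, AffineMap.lineMap_apply_module]

lemma lineMap_bary (hs : a + b + c ≠ 0) (r : k) :
    AffineMap.lineMap A (bary A B C a b c) r =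
      bary A B C (a + (1 - r) * (b + c)) (r * b) (r * c) := by
  rw [AffineMap.lineMap_apply_module, bary, bary,
    show a + (1 - r) * (b + c) + r * b + r * c = a + b + c by ring]
  match_scalars <;> field_simp
  ring

lemma midpoint_eq_bary [Invertible (2 : k)] : midpoint k B C = bary A B C (0 : k) 1 1 := by
  rw [midpoint_eq_smul_add, bary, invOf_eq_inv]
  match_scalars <;> norm_num

lemma pointReflection_midpoint_bary [Invertible (2 : k)] (hbc : b + c ≠ 0) :
    Equiv.pointReflection (midpoint k B C) (bary A B C 0 b c) = bary A B C 0 c b := by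
  have h2 : (2 : k) ≠ 0 := Invertible.ne_zero 2
  rw [Equiv.pointReflection_apply, midpoint_eq_smul_add, invOf_eq_inv, bary, bary, vsub_eq_sub,
    vadd_eq_add, zero_add, zero_add, add_comm c b]
  match_scalars <;> field_simp <;> ring

lemma homothety_bary (h2 : (2 : k) ≠ 0) (h3 : (3 : k) ≠ 0) (hs : a + b + c ≠ 0) :
    AffineMap.homothety (bary A B C (1 : k) 1 1) (-1 / 2 : k) (bary A B C a b c) =
      bary A B C (b + c) (c + a) (a + b) := by
  rw [AffineMap.homothety_apply, bary, bary, bary, vsub_eq_sub, vadd_eq_add,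
    show (1 : k) + 1 + 1 = 3 by norm_num, show b + c + (c + a) + (a + b) = 2 * (a + b + c) by ring]
  match_scalars <;> field_simp <;> ring

lemma AffineMap.map_bary {W : Type*} [AddCommGroup W] [Module k W] (T : V →ᵃ[k] W)
    (hs : a + b + c ≠ 0) : T (bary A B C a b c) = bary (T A) (T B) (T C) a b c := by
  rw [bary_eq_smul_add hs, bary_eq_smul_add hs, ← vadd_eq_add, T.map_vadd, map_smul, map_add,
    map_smul, map_smul, ← vsub_eq_sub, T.linearMap_vsub, ← vsub_eq_sub, T.linearMap_vsub]
  rfl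

lemma collinear_iff_not_linearIndependent_sub :
    Collinear k {A, X, Y} ↔ ¬ LinearIndependent k ![X - A, Y - A] := by
  rw [collinear_iff_not_affineIndependent_set, affineIndependent_iff_linearIndependent_vsub k _ 0,
    ← linearIndependent_equiv (finSuccAboveEquiv (0 : Fin 3))]
  convert! Iff.rfl
  ext i
  fin_cases i <;> rfl

lemma not_collinear_rotate (h : ¬ Collinear k {A, B, C}) : ¬ Collinear k {B, C, A} := by
  rwa [Set.pair_comm, Set.insert_comm]

lemma collinear_iff_mul_eq_mul (h : ¬ Collinear k {A, B, C}) {s s' : k} (hs : s ≠ 0)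
    (hs' : s' ≠ 0)
    (hX : s • (X - A) = b • (B - A) + c • (C - A))
    (hY : s' • (Y - A) = b' • (B - A) + c' • (C - A)) :
    Collinear k {A, X, Y} ↔ b * c' = c * b' := by
  rw [collinear_iff_not_linearIndependent_sub] at h ⊢
  rw [← LinearIndependent.pair_smul_smul_iff (IsUnit.mk0 _ hs) (IsUnit.mk0 _ hs'), hX, hY,
    LinearIndependent.pair_add_smul_add_smul_iff, not_and, not_not]
  exact ⟨fun h' => h' (not_not.1 h), fun h' _ => h'⟩

lemma collinear_bary_iff (h : ¬ Collinear k {A, B, C}) (hs : a + b + c ≠ 0)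
    (hs' : a' + b' + c' ≠ 0) :
    Collinear k {A, bary A B C a b c, bary A B C a' b' c'} ↔ b * c' = c * b' :=
  collinear_iff_mul_eq_mul h hs hs' (smul_bary_sub hs) (smul_bary_sub hs')

lemma collinear_vertex_vertex_bary_iff (h : ¬ Collinear k {A, B, C}) (hs : a + b + c ≠ 0) :
    Collinear k {A, B, bary A B C a b c} ↔ c = 0 := by
  have hB : bary A B C (0 : k) 1 0 = B := by simp [bary]
  have key := collinear_bary_iff (a := 0) (b := 1) (c := 0) (a' := a) (b' := b) (c' := c) h
    (by norm_num) hs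
  rw [hB] at key
  simpa using key

lemma collinear_bary_map_bary_iff {x y z q r : k} (h : ¬ Collinear k {A, B, C}) (T : V →ᵃ[k] V)
    (hTB : T B = bary A B C x 0 z) (hTC : T C = bary A B C x y 0) (hxz : x + z ≠ 0)
    (hxy : x + y ≠ 0) (hs : a + b + c ≠ 0) (hqr : q + r ≠ 0) :
    Collinear k {A, bary A B C a b c, T (bary A B C 0 q r)} ↔
      b * (q * z / (x + z)) = c * (r * y / (x + y)) := by
  refine collinear_iff_mul_eq_mul h hs hqr (smul_bary_sub hs) ?_
  rw [T.map_bary (by simpa using hqr), hTB, hTC]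
  simp only [bary, zero_add, add_zero]
  match_scalars <;> field_simp <;> ring

lemma exists_eq_bary_of_collinear {D P : V} (h : ¬ Collinear k {A, B, C})
    (hD : Collinear k {B, C, D}) (hP : Collinear k {A, P, D}) :
    ∃ x y z : k, x + y + z = 1 ∧ P = bary A B C x y z := by
  obtain ⟨t, rfl⟩ := mem_affineSpan_pair_iff_exists_lineMap_eq.1 <|
    hD.mem_affineSpan_of_mem_of_ne (p₃ := D) (by simp) (by simp) (by simp)
      (ne₂₃_of_not_collinear h)
  have hAD : A ≠ AffineMap.lineMap B C t := fun hA => not_collinear_rotate h (by rwa [hA])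
  obtain ⟨r, rfl⟩ := mem_affineSpan_pair_iff_exists_lineMap_eq.1 <|
    hP.mem_affineSpan_of_mem_of_ne (p₂ := AffineMap.lineMap B C t) (p₃ := P) (by simp) (by simp)
      (by simp) hAD
  rw [lineMap_eq_bary (A := A) (B := B) (C := C), lineMap_bary (by norm_num)]
  exact ⟨_, _, _, by ring, rfl⟩

lemma eq_bary_of_collinear_of_collinear (h : ¬ Collinear k {A, B, C}) (hs : a + b + c ≠ 0)
    (hb : b ≠ 0) (hs' : a' + c' ≠ 0) (hc' : c' ≠ 0)
    (hA : Collinear k {A, bary A B C a b c, X})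
    (hB : Collinear k {B, bary A B C a' 0 c', X}) :
    a' * c + b * c' + c * c' ≠ 0 ∧ X = bary A B C (a' * c) (b * c') (c * c') := by
  have hLI : LinearIndependent k ![B - A, C - A] := by
    simpa [collinear_iff_not_linearIndependent_sub] using h
  have hAW : A ≠ bary A B C a b c := fun hW => hb <| (LinearIndependent.pair_iff.1 hLI b c <| by
    rw [← smul_bary_sub hs, ← hW, sub_self, smul_zero]).1
  obtain ⟨r, rfl⟩ := mem_affineSpan_pair_iff_exists_lineMap_eq.1 <|
    hA.mem_affineSpan_of_mem_of_ne (p₃ := X) (by simp) (by simp) (by simp) hAW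
  rw [lineMap_bary hs] at hB ⊢
  rw [← bary_rotate (a := a'), ← bary_rotate (a := a + (1 - r) * (b + c)),
    collinear_bary_iff (not_collinear_rotate h) (by simpa [add_comm] using hs')
      (by convert hs using 1; ring)] at hB
  have hr : r ≠ 0 := by
    rintro rfl
    exact mul_ne_zero hc' hs (by linear_combination hB)
  have hm : r / c' ≠ 0 := div_ne_zero hr hc'
  constructor
  · intro h0
    apply hs
    calc a + b + c = r / c' * (a' * c + b * c' + c * c') := by
          field_simp
          linear_combination hB
      _ = 0 := by rw [h0, mul_zero]
  · have ha : r / c' * (a' * c) = a + (1 - r) * (b + c) := by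
      field_simp
      linear_combination -hB
    rw [← bary_mul hm (a := a' * c) (b := b * c') (c := c * c'), ha]
    congr 1 <;> field_simp

lemma cevian_eq_bary (h : ¬ Collinear k {A, B, C}) (hs : a + b + c ≠ 0) (hb : b ≠ 0)
    (hA : Collinear k {A, bary A B C a b c, X}) (hBC : Collinear k {B, C, X}) :
    b + c ≠ 0 ∧ X = bary A B C 0 b c := by
  rw [← bary_zero_zero_one (k := k) (A := A) (B := B) (C := C)] at hBC
  simpa using eq_bary_of_collinear_of_collinear h hs hb (by norm_num) one_ne_zero hA hBC

lemma exists_bary_cevianTriangle {P D E F : V} (h : ¬ Collinear k {A, B, C})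
    (hPa : ¬ Collinear k {B, C, P}) (hPb : ¬ Collinear k {C, A, P})
    (hPc : ¬ Collinear k {A, B, P}) (hD : Collinear k {B, C, D}) (hDcev : Collinear k {A, P, D})
    (hE : Collinear k {C, A, E}) (hEcev : Collinear k {B, P, E}) (hF : Collinear k {A, B, F})
    (hFcev : Collinear k {C, P, F}) :
    ∃ x y z : k, x + y + z = 1 ∧ x ≠ 0 ∧ y ≠ 0 ∧ z ≠ 0 ∧
      y + z ≠ 0 ∧ z + x ≠ 0 ∧ x + y ≠ 0 ∧
      P = bary A B C x y z ∧ D = bary A B C 0 y z ∧ E = bary A B C x 0 z ∧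
      F = bary A B C x y 0 := by
  have h' := not_collinear_rotate h
  have h'' := not_collinear_rotate h'
  obtain ⟨x, y, z, hxyz, rfl⟩ := exists_eq_bary_of_collinear h hD hDcev
  have hs : x + y + z ≠ 0 := hxyz ▸ one_ne_zero
  have hs' : y + z + x ≠ 0 := by convert hs using 1; ring
  have hs'' : z + x + y ≠ 0 := by convert hs using 1; ring
  rw [← bary_rotate] at hPa hEcev
  rw [← bary_rotate, ← bary_rotate] at hPb hFcev
  have hx : x ≠ 0 := mt (collinear_vertex_vertex_bary_iff h' hs').2 hPa
  have hy : y ≠ 0 := mt (collinear_vertex_vertex_bary_iff h'' hs'').2 hPb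
  have hz : z ≠ 0 := mt (collinear_vertex_vertex_bary_iff h hs).2 hPc
  obtain ⟨hyz, rfl⟩ := cevian_eq_bary h hs hy hDcev hD
  obtain ⟨hzx, rfl⟩ := cevian_eq_bary h' hs' hz hEcev hE
  obtain ⟨hxy, rfl⟩ := cevian_eq_bary h'' hs'' hx hFcev hF
  refine ⟨x, y, z, hxyz, hx, hy, hz, hyz, hzx, hxy, rfl, rfl, bary_rotate, ?_⟩
  rw [bary_rotate, bary_rotate]

lemma isotomicConjugate_eq_bary [Invertible (2 : k)] {x y z : k} (h : ¬ Collinear k {A, B, C})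
    (hx : x ≠ 0) (hz : z ≠ 0) (hyz : y + z ≠ 0) (hzx : z + x ≠ 0)
    (hA : Collinear k {A, Equiv.pointReflection (midpoint k B C) (bary A B C 0 y z), X})
    (hB : Collinear k {B, Equiv.pointReflection (midpoint k C A) (bary A B C x 0 z), X}) :
    z * y + z * x + y * x ≠ 0 ∧ X = bary A B C (z * y) (z * x) (y * x) := by
  rw [pointReflection_midpoint_bary hyz] at hA
  rw [← bary_rotate, pointReflection_midpoint_bary hzx, bary_rotate] at hB
  exact eq_bary_of_collinear_of_collinear h (by simpa [add_comm] using hyz) hz hzx hx hA hB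

end Barycentric

open EuclideanGeometry Affine

local notation "Pt" => EuclideanSpace ℝ (Fin 2)

theorem stmt_11_general (A B C G P D E F D0 E0 D3 E3 P' Q Q' D2 D4 : Pt) (T : Pt →ᵃ[ℝ] Pt)
(hABC : AffineIndependent ℝ ![A, B, C])
    (hG : G = (1/3 : ℝ) • (A + B + C))
    (hPa : ¬ Collinear ℝ {B, C, P})
    (hPb : ¬ Collinear ℝ {C, A, P})
    (hPc : ¬ Collinear ℝ {A, B, P})
    (hD : Collinear ℝ {B, C, D}) (hDcev : Collinear ℝ {A, P, D})
    (hE : Collinear ℝ {C, A, E}) (hEcev : Collinear ℝ {B, P, E})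
    (hF : Collinear ℝ {A, B, F}) (hFcev : Collinear ℝ {C, P, F})
    (hD0 : D0 = midpoint ℝ B C) (hE0 : E0 = midpoint ℝ C A)
(hD3 : D3 = Equiv.pointReflection D0 D)
    (hE3 : E3 = Equiv.pointReflection E0 E)
(hP'a : Collinear ℝ {A, D3, P'})
    (hP'b : Collinear ℝ {B, E3, P'})
    (hQ : Q = AffineMap.homothety G (-1/2 : ℝ) P')
    (hTB : T B = E) (hTC : T C = F)
    (hQ' : Q' = AffineMap.homothety G (-1/2 : ℝ) P)
    (hD2 : Collinear ℝ {B, C, D2}) (hD2cev : Collinear ℝ {A, Q, D2})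
    (hD4 : Collinear ℝ {B, C, D4}) (hD4cev : Collinear ℝ {A, Q', D4}) :
    Collinear ℝ {A, Q', T D} ∧ Collinear ℝ {A, P, T D4} ∧
      Collinear ℝ {A, Q, T D0} ∧ Collinear ℝ {A, G, T D2} := by
  have h := affineIndependent_iff_not_collinear_set.1 hABC
  obtain ⟨x, y, z, hxyz, hx, hy, hz, hyz, hzx, hxy, rfl, rfl, rfl, rfl⟩ :=
    exists_bary_cevianTriangle h hPa hPb hPc hD hDcev hE hEcev hF hFcev
  have hs : x + y + z ≠ 0 := hxyz ▸ one_ne_zero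
  subst hD0 hE0 hD3 hE3
  obtain ⟨hσ, rfl⟩ := isotomicConjugate_eq_bary h hx hz hyz hzx hP'a hP'b
  obtain rfl : G = bary A B C (1 : ℝ) 1 1 := by
    rw [hG, bary, one_smul, one_smul, one_smul]; norm_num
  rw [homothety_bary two_ne_zero three_ne_zero hσ] at hQ
  rw [homothety_bary two_ne_zero three_ne_zero hs] at hQ'
  subst hQ hQ'
  have hQs : z * x + y * x + (y * x + z * y) + (z * y + z * x) ≠ 0 := by
    convert mul_ne_zero two_ne_zero hσ using 1; ring
  have hQ's : y + z + (z + x) + (x + y) ≠ 0 := by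
    convert mul_ne_zero two_ne_zero hs using 1; ring
  obtain ⟨hD2s, rfl⟩ := cevian_eq_bary h hQs
    (by convert mul_ne_zero hy hzx using 1; ring) hD2cev hD2
  obtain ⟨hD4s, rfl⟩ := cevian_eq_bary h hQ's hzx hD4cev hD4
  rw [midpoint_eq_bary (A := A)]
  have hxz : x + z ≠ 0 := by rwa [add_comm]
  refine ⟨(collinear_bary_map_bary_iff h T hTB hTC hxz hxy hQ's hyz).2 ?_,
    (collinear_bary_map_bary_iff h T hTB hTC hxz hxy hs hD4s).2 ?_,
    (collinear_bary_map_bary_iff h T hTB hTC hxz hxy hQs (by norm_num)).2 ?_,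
    (collinear_bary_map_bary_iff h T hTB hTC hxz hxy (by norm_num) hD2s).2 ?_⟩
  all_goals field_simp; ring

theorem stmt_11 (A B C G P D E F D0 E0 F0 D3 E3 F3 P' Q Q' D2 D4 : Pt) (T : Pt →ᵃ[ℝ] Pt)
(hABC : AffineIndependent ℝ ![A, B, C])
    (hG : G = (1/3 : ℝ) • (A + B + C))
    (hPa : ¬ Collinear ℝ {B, C, P})
    (hPb : ¬ Collinear ℝ {C, A, P})
    (hPc : ¬ Collinear ℝ {A, B, P})
    (hD : Collinear ℝ {B, C, D}) (hDcev : Collinear ℝ {A, P, D})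
    (hE : Collinear ℝ {C, A, E}) (hEcev : Collinear ℝ {B, P, E})
    (hF : Collinear ℝ {A, B, F}) (hFcev : Collinear ℝ {C, P, F})
    (hD0 : D0 = midpoint ℝ B C) (hE0 : E0 = midpoint ℝ C A) (hF0 : F0 = midpoint ℝ A B)
(hD3 : D3 = Equiv.pointReflection D0 D)
    (hE3 : E3 = Equiv.pointReflection E0 E)
    (hF3 : F3 = Equiv.pointReflection F0 F)
(hP'a : Collinear ℝ {A, D3, P'})
    (hP'b : Collinear ℝ {B, E3, P'})
    (hP'c : Collinear ℝ {C, F3, P'})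
    (hQ : Q = AffineMap.homothety G (-1/2 : ℝ) P')
    (hTA : T A = D) (hTB : T B = E) (hTC : T C = F)
    (hQ' : Q' = AffineMap.homothety G (-1/2 : ℝ) P)
    (hD2 : Collinear ℝ {B, C, D2}) (hD2cev : Collinear ℝ {A, Q, D2})
    (hD4 : Collinear ℝ {B, C, D4}) (hD4cev : Collinear ℝ {A, Q', D4}) :
    Collinear ℝ {A, Q', T D} ∧ Collinear ℝ {A, P, T D4} ∧
      Collinear ℝ {A, Q, T D0} ∧ Collinear ℝ {A, G, T D2} :=
  stmt_11_general A B C G P D E F D0 E0 D3 E3 P' Q Q' D2 D4 T hABC hG hPa hPb hPc hD hDcev hE hEcev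
    hF hFcev hD0 hE0 hD3 hE3 hP'a hP'b hQ hTB hTC hQ' hD2 hD2cev hD4 hD4cev
end

section
/- Assume D, E, F are affinely independent. Let A' be a point with A' ∉ {B, C} such that line BA' ∥ line DF and line CA' ∥ line DE; let B' be a point with B' ∉ {A, C} such that line AB' ∥ line EF and line CB' ∥ line DE; let C' be a point with C' ∉ {A, B} such that line AC' ∥ line EF and line BC' ∥ line DF. Then T'(A') = A, T'(B') = B, T'(C') = C; that is, the anticevian triangle A'B'C' of Q with respect to ABC equals T'⁻¹(ABC). -/
/-!
In barycentric coordinates with respect to `ABC` let `P = (u : v : w)`. Its cevian traces are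
`D = (0 : v : w)`, `E = (u : 0 : w)`, `F = (u : v : 0)`, and their reflections in the midpoints of
the sides are `D3 = (0 : w : v)`, `E3 = (w : 0 : u)`, `F3 = (v : u : 0)`. The line through `B`
parallel to `DF` meets the line through `C` parallel to `DE` in
`A' = (-u(v+w) : v(w+u) : w(u+v))`. Since `T'` is affine, `T'(A')` is the combination of
`D3, E3, F3` with the normalized weights of `A'`, and this combination is `A`. Relabelling the
triangle cyclically gives `B'` and `C'`.
-/

open EuclideanGeometry Affine

local notation "Pt" => EuclideanSpace ℝ (Fin 2)

open AffineMap

section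

variable {k V P : Type*} [Field k] [AddCommGroup V] [Module k V] [AddTorsor V P]

theorem AffineSubspace.Parallel.exists_smul_vsub_eq {p₁ p₂ q₁ q₂ : P}
    (h : line[k, p₁, p₂] ∥ line[k, q₁, q₂]) :
    ∃ r : k, r • (q₂ -ᵥ q₁) = p₂ -ᵥ p₁ := by
  have hp := vsub_rev_mem_vectorSpan_pair k p₁ p₂
  rwa [← direction_affineSpan, h.direction_eq, direction_affineSpan,
    mem_vectorSpan_pair_rev] at hp

theorem AffineMap.map_pointReflection_midpoint [Invertible (2 : k)] (f : P →ᵃ[k] k)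
    (p q x : P) :
    f (Equiv.pointReflection (midpoint k p q) x) = f p + f q - f x := by
  rw [Equiv.pointReflection_apply, f.map_vadd, f.linearMap_vsub, f.map_midpoint,
    midpoint_eq_smul_add, vsub_eq_sub, vadd_eq_add, smul_eq_mul]
  linear_combination (f p + f q) * mul_invOf_self (2 : k)

namespace AffineBasis

variable {ι : Type*} (b : AffineBasis ι k P)

theorem apply_eq_sum_coord_mul_s15 [Fintype ι] (f : P →ᵃ[k] k) (x : P) :
    f x = ∑ i, b.coord i x * f (b i) := by
  conv_lhs => rw [← b.affineCombination_coord_eq_self x]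
  rw [Finset.map_affineCombination _ _ _ (b.sum_coord_apply_eq_one x),
    Finset.affineCombination_eq_linear_combination _ _ _ (b.sum_coord_apply_eq_one x)]
  rfl

theorem coord_eq_zero_of_collinear {i j l : ι} (hj : j ≠ i) (hl : l ≠ i) (hjl : j ≠ l) {x : P}
    (h : Collinear k {b j, b l, x}) : b.coord i x = 0 := by
  obtain ⟨r, rfl⟩ := mem_affineSpan_pair_iff_exists_lineMap_eq.mp <|
    h.mem_affineSpan_of_mem_of_ne (p₃ := x) (by simp) (by simp) (by simp)
      (b.ind.injective.ne hjl)
  rw [apply_lineMap, b.coord_apply_ne hj.symm, b.coord_apply_ne hl.symm, lineMap_same_apply]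

theorem coord_eq_div_of_collinear {i : ι} {x d : P} (hx : b i ≠ x)
    (hxd : Collinear k {b i, x, d}) (hd : b.coord i d = 0) :
    b.coord i x ≠ 1 ∧ ∀ j ≠ i, b.coord j d = b.coord j x / (1 - b.coord i x) := by
  obtain ⟨r, rfl⟩ := mem_affineSpan_pair_iff_exists_lineMap_eq.mp <|
    hxd.mem_affineSpan_of_mem_of_ne (p₃ := d) (by simp) (by simp) (by simp) hx
  rw [apply_lineMap, b.coord_apply_eq, lineMap_apply_ring] at hd
  have hr : r * (1 - b.coord i x) = 1 := by linear_combination -hd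
  refine ⟨fun h => by simp [h] at hr, fun j hj => ?_⟩
  rw [apply_lineMap, b.coord_apply_ne hj, lineMap_apply_ring,
    eq_div_iff (right_ne_zero_of_mul_eq_one hr)]
  linear_combination b.coord j x * hr

theorem coord_zero_ne_zero_of_not_collinear (b : AffineBasis (Fin 3) k P) {x : P}
    (h : ¬ Collinear k {b 1, b 2, x}) : b.coord 0 x ≠ 0 := by
  intro h0
  have hx : x = lineMap (b 1) (b 2) (b.coord 2 x) := by
    have hsum := b.sum_coord_apply_eq_one x
    rw [Fin.sum_univ_three, h0] at hsum
    refine b.ext_elem fun j => ?_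
    fin_cases j
    · simp [apply_lineMap, b.coord_apply, h0]
    · simp only [Fin.mk_one, Fin.isValue, apply_lineMap, b.coord_apply, ↓reduceIte, Fin.reduceEq,
        lineMap_apply_ring, mul_one, mul_zero, add_zero]
      linear_combination hsum
    · simp [apply_lineMap, b.coord_apply, lineMap_apply_ring]
  exact h (collinear_triple_of_mem_affineSpan_pair (left_mem_affineSpan_pair k _ _)
    (right_mem_affineSpan_pair k _ _) (hx ▸ lineMap_mem_affineSpan_pair _ _ _))

end AffineBasis

theorem exists_affineBasis_of_not_collinear [FiniteDimensional k V]
    (hV : Module.finrank k V = 2) {A B C : P} (h : ¬ Collinear k {A, B, C}) :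
    ∃ b : AffineBasis (Fin 3) k P, b 0 = A ∧ b 1 = B ∧ b 2 = C := by
  have hind := affineIndependent_iff_not_collinear_set.2 h
  exact ⟨⟨![A, B, C], hind,
    hind.affineSpan_eq_top_iff_card_eq_finrank_add_one.2 (by simp [hV])⟩, rfl, rfl, rfl⟩

/-- The hypotheses on `a` are coordinates of `A' -ᵥ B = l • (F -ᵥ D)` and
`A' -ᵥ C = m • (E -ᵥ D)`; they force `(a₀, a₁, a₂) = (-u(v+w), v(w+u), w(u+v)) / 2vw`. The
conclusions are the coordinates of `a₀ D3 + a₁ E3 + a₂ F3 = A`. -/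
theorem anticevian_weights_combination {u v w l m a₀ a₁ a₂ : k} (hsum : u + v + w = 1)
    (hu : u ≠ 0) (hu1 : u ≠ 1) (hv1 : v ≠ 1) (hw1 : w ≠ 1) (ha : a₀ + a₁ + a₂ = 1)
    (hl₀ : l * (u / (1 - w)) = a₀) (hl₂ : -(l * (w / (1 - u))) = a₂)
    (hm₀ : m * (u / (1 - v)) = a₀) (hm₁ : -(m * (v / (1 - u))) = a₁) :
    a₁ * (1 - u / (1 - v)) + a₂ * (1 - u / (1 - w)) = 1 ∧
    a₀ * (1 - v / (1 - u)) + a₂ * (1 - v / (1 - w)) = 0 ∧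
    a₀ * (1 - w / (1 - u)) + a₁ * (1 - w / (1 - v)) = 0 := by
  have hu1' : 1 - u ≠ 0 := sub_ne_zero.2 hu1.symm
  have hv1' : 1 - v ≠ 0 := sub_ne_zero.2 hv1.symm
  have hw1' : 1 - w ≠ 0 := sub_ne_zero.2 hw1.symm
  have hlm : m * (1 - w) = l * (1 - v) := by
    have h := hl₀.trans hm₀.symm
    field_simp at h
    linear_combination -h
  have hl : l * (2 * v * w) = -((1 - u) * (1 - w)) := by
    subst hl₀ hl₂ hm₁
    field_simp at ha
    linear_combination -ha - v * hlm - l * (u - v - w) * hsum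
  obtain ⟨⟨h2, hv⟩, hw⟩ : ((2 : k) ≠ 0 ∧ v ≠ 0) ∧ w ≠ 0 := by
    simp only [← mul_ne_zero_iff]
    intro h
    rw [h, mul_zero, eq_comm, neg_eq_zero] at hl
    exact mul_ne_zero hu1' hw1' hl
  obtain rfl : l = -((1 - u) * (1 - w)) / (2 * v * w) := by
    field_simp
    linear_combination hl
  obtain rfl : a₁ = 1 - a₀ - a₂ := by linear_combination ha
  obtain rfl : u = 1 - v - w := by linear_combination hsum
  subst hl₀ hl₂
  refine ⟨?_, ?_, ?_⟩ <;> field_simp <;> ring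

theorem apply_eq_of_parallel_cevian [FiniteDimensional k V] [Invertible (2 : k)]
    (hV : Module.finrank k V = 2) {A B C X D E F A' : P} {T : P →ᵃ[k] P}
    (hABC : ¬ Collinear k {A, B, C}) (hXa : ¬ Collinear k {B, C, X})
    (hXb : ¬ Collinear k {C, A, X}) (hXc : ¬ Collinear k {A, B, X})
    (hD : Collinear k {B, C, D}) (hXD : Collinear k {A, X, D})
    (hE : Collinear k {C, A, E}) (hXE : Collinear k {B, X, E})
    (hF : Collinear k {A, B, F}) (hXF : Collinear k {C, X, F})
    (hTA : T A = Equiv.pointReflection (midpoint k B C) D)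
    (hTB : T B = Equiv.pointReflection (midpoint k C A) E)
    (hTC : T C = Equiv.pointReflection (midpoint k A B) F)
    (hBA' : line[k, B, A'] ∥ line[k, D, F]) (hCA' : line[k, C, A'] ∥ line[k, D, E]) :
    T A' = A := by
  obtain ⟨b, rfl, rfl, rfl⟩ := exists_affineBasis_of_not_collinear hV hABC
  have hsum := b.sum_coord_apply_eq_one X
  have hsumA := b.sum_coord_apply_eq_one A'
  rw [Fin.sum_univ_three] at hsum hsumA
  have hD0 := b.coord_eq_zero_of_collinear (i := 0) (by decide) (by decide) (by decide) hD
  have hE1 := b.coord_eq_zero_of_collinear (i := 1) (by decide) (by decide) (by decide) hE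
  have hF2 := b.coord_eq_zero_of_collinear (i := 2) (by decide) (by decide) (by decide) hF
  obtain ⟨hu1, hD'⟩ := b.coord_eq_div_of_collinear (ne₁₃_of_not_collinear hXc) hXD hD0
  obtain ⟨hv1, hE'⟩ := b.coord_eq_div_of_collinear (ne₁₃_of_not_collinear hXa) hXE hE1
  obtain ⟨hw1, hF'⟩ := b.coord_eq_div_of_collinear (ne₁₃_of_not_collinear hXb) hXF hF2
  obtain ⟨l, hl⟩ := hBA'.exists_smul_vsub_eq
  obtain ⟨m, hm⟩ := hCA'.exists_smul_vsub_eq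
  have hl' (j : Fin 3) : l * (b.coord j F - b.coord j D) = b.coord j A' - b.coord j (b 1) := by
    simpa only [map_smul, linearMap_vsub, vsub_eq_sub, smul_eq_mul] using
      congrArg (b.coord j).linear hl
  have hm' (j : Fin 3) : m * (b.coord j E - b.coord j D) = b.coord j A' - b.coord j (b 2) := by
    simpa only [map_smul, linearMap_vsub, vsub_eq_sub, smul_eq_mul] using
      congrArg (b.coord j).linear hm
  have key := anticevian_weights_combination hsum (b.coord_zero_ne_zero_of_not_collinear hXa)
    hu1 hv1 hw1 hsumA (by simpa [b.coord_apply, hD', hF', hD0] using hl' 0)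
    (by simpa [b.coord_apply, hD', hF2] using hl' 2)
    (by simpa [b.coord_apply, hD', hE', hD0] using hm' 0)
    (by simpa [b.coord_apply, hD', hE1] using hm' 1)
  refine b.ext_elem fun j => ?_
  rw [show b.coord j (T A') = ((b.coord j).comp T) A' from rfl, b.apply_eq_sum_coord_mul_s15]
  simp only [Fin.sum_univ_three, comp_apply, hTA, hTB, hTC, map_pointReflection_midpoint,
    b.coord_apply]
  fin_cases j
  · simpa [hD0, hE', hF'] using key.1
  · simpa [hD', hE1, hF'] using key.2.1
  · simpa [hD', hE', hF2] using key.2.2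

end

theorem stmt_15_general (A B C P D E F D0 E0 F0 D3 E3 F3 A' B' C' : Pt) (T' : Pt →ᵃ[ℝ] Pt)
(hABC : AffineIndependent ℝ ![A, B, C])
    (hPa : ¬ Collinear ℝ {B, C, P})
    (hPb : ¬ Collinear ℝ {C, A, P})
    (hPc : ¬ Collinear ℝ {A, B, P})
    (hD : Collinear ℝ {B, C, D}) (hDcev : Collinear ℝ {A, P, D})
    (hE : Collinear ℝ {C, A, E}) (hEcev : Collinear ℝ {B, P, E})
    (hF : Collinear ℝ {A, B, F}) (hFcev : Collinear ℝ {C, P, F})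
    (hD0 : D0 = midpoint ℝ B C) (hE0 : E0 = midpoint ℝ C A) (hF0 : F0 = midpoint ℝ A B)
(hD3 : D3 = Equiv.pointReflection D0 D)
    (hE3 : E3 = Equiv.pointReflection E0 E)
    (hF3 : F3 = Equiv.pointReflection F0 F)
    (hBA' : line[ℝ, B, A'] ∥ line[ℝ, D, F])
    (hCA' : line[ℝ, C, A'] ∥ line[ℝ, D, E])
    (hAB' : line[ℝ, A, B'] ∥ line[ℝ, E, F])
    (hCB' : line[ℝ, C, B'] ∥ line[ℝ, D, E])
    (hAC' : line[ℝ, A, C'] ∥ line[ℝ, E, F])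
    (hBC' : line[ℝ, B, C'] ∥ line[ℝ, D, F])
    (hT'A : T' A = D3) (hT'B : T' B = E3) (hT'C : T' C = F3) :
    T' A' = A ∧ T' B' = B ∧ T' C' = C := by
  subst hD0 hE0 hF0 hD3 hE3 hF3
  have hV : Module.finrank ℝ Pt = 2 := finrank_euclideanSpace_fin
  have hABC' := affineIndependent_iff_not_collinear_set.1 hABC
  have hBCA : ¬ Collinear ℝ {B, C, A} := by rwa [Set.pair_comm C A, Set.insert_comm B A]
  have hCAB : ¬ Collinear ℝ {C, A, B} := by rwa [Set.insert_comm C A, Set.pair_comm C B]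
  refine ⟨?_, ?_, ?_⟩
  · exact apply_eq_of_parallel_cevian hV hABC' hPa hPb hPc hD hDcev hE hEcev hF hFcev
      hT'A hT'B hT'C hBA' hCA'
  · rw [Set.pair_comm D E] at hCB'
    exact apply_eq_of_parallel_cevian hV hBCA hPb hPc hPa hE hEcev hF hFcev hD hDcev
      hT'B hT'C hT'A hCB' hAB'
  · rw [Set.pair_comm E F] at hAC'
    rw [Set.pair_comm D F] at hBC'
    exact apply_eq_of_parallel_cevian hV hCAB hPc hPa hPb hF hFcev hD hDcev hE hEcev
      hT'C hT'A hT'B hAC' hBC'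

theorem stmt_15 (A B C G P D E F D0 E0 F0 D3 E3 F3 P' Q A' B' C' : Pt) (T' : Pt →ᵃ[ℝ] Pt)
(hABC : AffineIndependent ℝ ![A, B, C])
    (hG : G = (1/3 : ℝ) • (A + B + C))
    (hPa : ¬ Collinear ℝ {B, C, P})
    (hPb : ¬ Collinear ℝ {C, A, P})
    (hPc : ¬ Collinear ℝ {A, B, P})
    (hD : Collinear ℝ {B, C, D}) (hDcev : Collinear ℝ {A, P, D})
    (hE : Collinear ℝ {C, A, E}) (hEcev : Collinear ℝ {B, P, E})
    (hF : Collinear ℝ {A, B, F}) (hFcev : Collinear ℝ {C, P, F})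
    (hD0 : D0 = midpoint ℝ B C) (hE0 : E0 = midpoint ℝ C A) (hF0 : F0 = midpoint ℝ A B)
(hD3 : D3 = Equiv.pointReflection D0 D)
    (hE3 : E3 = Equiv.pointReflection E0 E)
    (hF3 : F3 = Equiv.pointReflection F0 F)
(hP'a : Collinear ℝ {A, D3, P'})
    (hP'b : Collinear ℝ {B, E3, P'})
    (hP'c : Collinear ℝ {C, F3, P'})
    (hQ : Q = AffineMap.homothety G (-1/2 : ℝ) P')
    (hDEF : AffineIndependent ℝ ![D, E, F])
    (hA'B : A' ≠ B) (hA'C : A' ≠ C)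
    (hBA' : line[ℝ, B, A'] ∥ line[ℝ, D, F])
    (hCA' : line[ℝ, C, A'] ∥ line[ℝ, D, E])
    (hB'A : B' ≠ A) (hB'C : B' ≠ C)
    (hAB' : line[ℝ, A, B'] ∥ line[ℝ, E, F])
    (hCB' : line[ℝ, C, B'] ∥ line[ℝ, D, E])
    (hC'A : C' ≠ A) (hC'B : C' ≠ B)
    (hAC' : line[ℝ, A, C'] ∥ line[ℝ, E, F])
    (hBC' : line[ℝ, B, C'] ∥ line[ℝ, D, F])
    (hT'A : T' A = D3) (hT'B : T' B = E3) (hT'C : T' C = F3) :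
    T' A' = A ∧ T' B' = B ∧ T' C' = C :=
  stmt_15_general A B C P D E F D0 E0 F0 D3 E3 F3 A' B' C' T' hABC hPa hPb hPc hD hDcev hE hEcev hF
    hFcev hD0 hE0 hF0 hD3 hE3 hF3 hBA' hCA' hAB' hCB' hAC' hBC' hT'A hT'B hT'C
end

section
/- Let X' be a point such that {A, T'(D), X'}, {B, T'(E), X'}, and {C, T'(F), X'} are each collinear (X' is the perspector of the cevian triangle of P' and T⁻¹(ABC)). Then {A, T(D3), T(X')}, {B, T(E3), T(X')}, and {C, T(F3), T(X')} are each collinear; that is, T(X') is the perspector X of the cevian triangle of P and T'⁻¹(ABC). -/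
/-!
Work in affine coordinates in which `A = (0, 0)`, `B = (1, 0)`, `C = (0, 1)` and `P = (q, r)`, and
put `p = 1 - q - r`. Collinearity of three points is the vanishing of a `2 × 2` determinant, and an
affine map is determined by the images of `A, B, C`, so every point of the configuration becomes
explicit. The cevian traces are `D = (q, r) / (q + r)`, `E = (0, r / (1 - q))`,
`F = (q / (1 - r), 0)`, and their reflections in the midpoints swap the two nonzero barycentric
weights. Intersecting the lines `A T'(D)` and `B T'(E)` gives, in barycentrics,
`X' = (qr(q + r) : rp(r + p) : pq(p + q))`, and then
`T(X') = (p²(q + r) : q²(r + p) : r²(p + q))`, whose collinearity with `A, T(D3)` (and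
cyclically) is a polynomial identity.
-/

open EuclideanGeometry Affine

local notation "Pt" => EuclideanSpace ℝ (Fin 2)

open Module

section PlaneCoordinates

variable {k V P : Type*} [Field k] [AddCommGroup V] [Module k V] [AddTorsor V P]

theorem affineIndependent_iff_linearIndependent_vsub_three (X Y Z : P) :
    AffineIndependent k ![X, Y, Z] ↔ LinearIndependent k ![Y -ᵥ X, Z -ᵥ X] := by
  rw [affineIndependent_iff_linearIndependent_vsub k _ 0,
    ← linearIndependent_equiv (finSuccAboveEquiv 0)]
  have h : (fun i : {x : Fin 3 // x ≠ 0} => ![X, Y, Z] i -ᵥ ![X, Y, Z] 0) ∘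
      finSuccAboveEquiv 0 = ![Y -ᵥ X, Z -ᵥ X] := by
    ext i
    fin_cases i <;> rfl
  rw [h]

theorem Module.Basis.linearIndependent_iff_det_ne_zero {ι : Type*} [Fintype ι] [DecidableEq ι]
    (b : Basis ι k V) {v : ι → V} : LinearIndependent k v ↔ b.det v ≠ 0 := by
  rw [← isUnit_iff_ne_zero, ← b.is_basis_iff_det]
  have := b.finiteDimensional_of_finite
  exact ⟨fun hv => ⟨hv, hv.span_eq_top_of_card_eq_finrank' (finrank_eq_card_basis b).symm⟩,
    And.left⟩

noncomputable def frameCoords {ι : Type*} [Fintype ι] (b : Basis ι k V) (O : P) :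
    P →ᵃ[k] ι → k where
  toFun Q := b.equivFun (Q -ᵥ O)
  linear := b.equivFun.toLinearMap
  map_vadd' Q v := by simp [vadd_vsub_assoc]

theorem frameCoords_sub_frameCoords {ι : Type*} [Fintype ι] (b : Basis ι k V) (O X Y : P) :
    frameCoords b O Y - frameCoords b O X = b.equivFun (Y -ᵥ X) :=
  ((frameCoords b O).linearMap_vsub Y X).symm

theorem collinear_iff_det_frameCoords (b : Basis (Fin 2) k V) (O X Y Z : P) :
    Collinear k {X, Y, Z} ↔
      (Matrix.of ![frameCoords b O Y - frameCoords b O X,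
        frameCoords b O Z - frameCoords b O X]).det = 0 := by
  rw [collinear_iff_not_affineIndependent_set, affineIndependent_iff_linearIndependent_vsub_three,
    b.linearIndependent_iff_det_ne_zero, not_not, Basis.det_apply, ← Matrix.det_transpose,
    frameCoords_sub_frameCoords, frameCoords_sub_frameCoords]
  congr! 2
  ext i j
  fin_cases i <;> simp [Basis.toMatrix_apply]

theorem AffineMap.apply_eq_sum_frameCoords {ι : Type*} [Fintype ι] {V₂ P₂ : Type*}
    [AddCommGroup V₂] [Module k V₂] [AddTorsor V₂ P₂] (b : Basis ι k V) (O : P)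
    (f : P →ᵃ[k] P₂) (Q : P) :
    f Q = (∑ i, frameCoords b O Q i • f.linear (b i)) +ᵥ f O := by
  calc f Q = f.linear (Q -ᵥ O) +ᵥ f O := by rw [f.linearMap_vsub, vsub_vadd]
    _ = _ := by
      rw [← b.sum_equivFun (Q -ᵥ O), map_sum]
      simp only [map_smul]
      rfl

theorem AffineMap.map_pointReflection_midpoint_s16 [Invertible (2 : k)] {V₂ : Type*}
    [AddCommGroup V₂] [Module k V₂] (f : P →ᵃ[k] V₂) (B C D : P) :
    f (Equiv.pointReflection (midpoint k B C) D) = f B + f C - f D := by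
  rw [Equiv.pointReflection_apply, f.map_vadd, f.linearMap_vsub, f.map_midpoint, vsub_eq_sub,
    vadd_eq_add, ← midpoint_add_self (R := k) (f B)]
  abel

variable {A B C : P} (h : AffineIndependent k ![A, B, C]) (hV : finrank k V = 2)

noncomputable def triangleBasis : Basis (Fin 2) k V :=
  basisOfLinearIndependentOfCardEqFinrank
    ((affineIndependent_iff_linearIndependent_vsub_three A B C).1 h) (by simp [hV])

theorem coe_triangleBasis : ⇑(triangleBasis h hV) = ![B -ᵥ A, C -ᵥ A] :=
  coe_basisOfLinearIndependentOfCardEqFinrank _ _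

noncomputable def triangleCoords : P →ᵃ[k] Fin 2 → k :=
  frameCoords (triangleBasis h hV) A

local notation "κ" => triangleCoords h hV

theorem triangleCoords_apply (X : P) : κ X = (triangleBasis h hV).equivFun (X -ᵥ A) := rfl

theorem triangleCoords_vertex_zero : κ A = ![0, 0] := by
  rw [triangleCoords_apply, vsub_self, map_zero]
  ext i; fin_cases i <;> rfl

theorem triangleCoords_vertex_one : κ B = ![1, 0] := by
  rw [triangleCoords_apply, ← show triangleBasis h hV 0 = B -ᵥ A by simp [coe_triangleBasis]]
  ext i; fin_cases i <;> simp [Basis.equivFun_self]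

theorem triangleCoords_vertex_two : κ C = ![0, 1] := by
  rw [triangleCoords_apply, ← show triangleBasis h hV 1 = C -ᵥ A by simp [coe_triangleBasis]]
  ext i; fin_cases i <;> simp [Basis.equivFun_self]

theorem collinear_iff_triangleCoords (X Y Z : P) :
    Collinear k {X, Y, Z} ↔
      (κ Y 0 - κ X 0) * (κ Z 1 - κ X 1) = (κ Y 1 - κ X 1) * (κ Z 0 - κ X 0) := by
  rw [collinear_iff_det_frameCoords (triangleBasis h hV) A, Matrix.det_fin_two, sub_eq_zero]
  rfl

theorem triangleCoords_map (f : P →ᵃ[k] P) (X : P) :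
    κ (f X) = κ (f A) + κ X 0 • (κ (f B) - κ (f A)) + κ X 1 • (κ (f C) - κ (f A)) := by
  have key := ((triangleCoords h hV).comp f).apply_eq_sum_frameCoords (triangleBasis h hV) A X
  rw [Fin.sum_univ_two, coe_triangleBasis] at key
  simp only [Matrix.cons_val_zero, Matrix.cons_val_one, AffineMap.linearMap_vsub,
    AffineMap.comp_apply, vsub_eq_sub, vadd_eq_add] at key
  rw [key, add_comm, ← add_assoc]
  rfl

end PlaneCoordinates

section Isotomic

variable {k V : Type*} [Field k] [AddCommGroup V] [Module k V]
  {A B C P D E F : V} (h : AffineIndependent k ![A, B, C]) (hV : finrank k V = 2) {q r : k}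

local notation "κ" => triangleCoords h hV

theorem triangleCoords_ne_zero_of_not_collinear (hP : κ P = ![q, r])
    (hPa : ¬ Collinear k {B, C, P}) (hPb : ¬ Collinear k {C, A, P})
    (hPc : ¬ Collinear k {A, B, P}) : q ≠ 0 ∧ r ≠ 0 ∧ 1 - q - r ≠ 0 := by
  simp only [collinear_iff_triangleCoords h hV, hP, triangleCoords_vertex_zero,
    triangleCoords_vertex_one, triangleCoords_vertex_two, Matrix.cons_val_zero, Matrix.cons_val_one,
    Matrix.cons_val_fin_one] at hPa hPb hPc
  exact ⟨fun h0 => hPb (by linear_combination h0), fun h0 => hPc (by linear_combination h0),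
    fun h0 => hPa (by linear_combination h0)⟩

theorem triangleCoords_cevianTrace_BC (hP : κ P = ![q, r]) (hq : q ≠ 0)
    (hD : Collinear k {B, C, D}) (hDcev : Collinear k {A, P, D}) :
    q + r ≠ 0 ∧ κ D = ![q / (q + r), r / (q + r)] := by
  simp only [collinear_iff_triangleCoords h hV, hP, triangleCoords_vertex_zero,
    triangleCoords_vertex_one, triangleCoords_vertex_two, Matrix.cons_val_zero, Matrix.cons_val_one,
    Matrix.cons_val_fin_one] at hD hDcev
  have hqr : q + r ≠ 0 := fun h0 => hq (by linear_combination q * hD + hDcev + κ D 0 * h0)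
  refine ⟨hqr, ?_⟩
  ext i
  fin_cases i <;>
    simp only [Fin.zero_eta, Fin.mk_one, Matrix.cons_val_zero, Matrix.cons_val_one] <;>
    rw [eq_div_iff hqr]
  · linear_combination -q * hD - hDcev
  · linear_combination -r * hD + hDcev

theorem triangleCoords_cevianTrace_CA (hP : κ P = ![q, r]) (hr : r ≠ 0)
    (hE : Collinear k {C, A, E}) (hEcev : Collinear k {B, P, E}) :
    1 - q ≠ 0 ∧ κ E = ![0, r / (1 - q)] := by
  simp only [collinear_iff_triangleCoords h hV, hP, triangleCoords_vertex_zero,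
    triangleCoords_vertex_one, triangleCoords_vertex_two, Matrix.cons_val_zero, Matrix.cons_val_one,
    Matrix.cons_val_fin_one] at hE hEcev
  have hq1 : 1 - q ≠ 0 := fun h0 => hr (by linear_combination hEcev + r * hE + κ E 1 * h0)
  refine ⟨hq1, ?_⟩
  ext i
  fin_cases i <;> simp only [Fin.zero_eta, Fin.mk_one, Matrix.cons_val_zero, Matrix.cons_val_one]
  · linear_combination hE
  · rw [eq_div_iff hq1]
    linear_combination -hEcev - r * hE

theorem triangleCoords_cevianTrace_AB (hP : κ P = ![q, r]) (hq : q ≠ 0)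
    (hF : Collinear k {A, B, F}) (hFcev : Collinear k {C, P, F}) :
    1 - r ≠ 0 ∧ κ F = ![q / (1 - r), 0] := by
  simp only [collinear_iff_triangleCoords h hV, hP, triangleCoords_vertex_zero,
    triangleCoords_vertex_one, triangleCoords_vertex_two, Matrix.cons_val_zero, Matrix.cons_val_one,
    Matrix.cons_val_fin_one] at hF hFcev
  have hr1 : 1 - r ≠ 0 := fun h0 => hq (by linear_combination -hFcev + q * hF + κ F 0 * h0)
  refine ⟨hr1, ?_⟩
  ext i
  fin_cases i <;> simp only [Fin.zero_eta, Fin.mk_one, Matrix.cons_val_zero, Matrix.cons_val_one]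
  · rw [eq_div_iff hr1]
    linear_combination hFcev - q * hF
  · linear_combination hF

/-- With `p = 1 - q - r`, this is `qr(q + r) + rp(r + p) + pq(p + q)`, the sum of the barycentric
weights of `X'`. -/
def perspectorDenom (q r : k) : k :=
  q * r * (q + r) + (1 - q - r) * r * (1 - q) + (1 - q - r) * q * (1 - r)

theorem triangleCoords_perspector [Invertible (2 : k)] {X' : V}
    (hq : q ≠ 0) (hr : r ≠ 0) (hp : 1 - q - r ≠ 0) (hqr : q + r ≠ 0) (hq1 : 1 - q ≠ 0)
    (hr1 : 1 - r ≠ 0)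
    (hcD : κ D = ![q / (q + r), r / (q + r)]) (hcE : κ E = ![0, r / (1 - q)])
    (hcF : κ F = ![q / (1 - r), 0]) (T' : V →ᵃ[k] V)
    (hT'A : T' A = Equiv.pointReflection (midpoint k B C) D)
    (hT'B : T' B = Equiv.pointReflection (midpoint k C A) E)
    (hT'C : T' C = Equiv.pointReflection (midpoint k A B) F)
    (hX'a : Collinear k {A, T' D, X'}) (hX'b : Collinear k {B, T' E, X'}) :
    perspectorDenom q r ≠ 0 ∧ κ X' = ![(1 - q - r) * r * (1 - q) / perspectorDenom q r,
      (1 - q - r) * q * (1 - r) / perspectorDenom q r] := by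
  set W := perspectorDenom q r with hW_def
  obtain ⟨u, v, hX'⟩ : ∃ u v, κ X' = ![u, v] := ⟨_, _, (FinVec.etaExpand_eq _).symm⟩
  simp only [collinear_iff_triangleCoords h hV, triangleCoords_map h hV T', hT'A, hT'B, hT'C,
    AffineMap.map_pointReflection_midpoint_s16, hcD, hcE, hcF, hX', triangleCoords_vertex_zero,
    triangleCoords_vertex_one, triangleCoords_vertex_two, Pi.add_apply, Pi.sub_apply,
    Pi.smul_apply, smul_eq_mul, Matrix.cons_val_zero, Matrix.cons_val_one,
    Matrix.cons_val_fin_one] at hX'a hX'b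
  field_simp at hX'a hX'b
  have h1 : r * (1 - q) * v = q * (1 - r) * u := by
    have : (q + r) * (1 - q - r) * (r * (1 - q) * v - q * (1 - r) * u) = 0 := by
      linear_combination hX'a
    linear_combination (mul_eq_zero.1 this).resolve_left (mul_ne_zero hqr hp)
  have h2 : (-1 + q + 2 * r - 2 * q * r - 2 * r ^ 2) * v = (1 - r) * (1 - q - r) * (u - 1) := by
    have : q * ((-1 + q + 2 * r - 2 * q * r - 2 * r ^ 2) * v -
        (1 - r) * (1 - q - r) * (u - 1)) = 0 := by
      linear_combination hX'b
    linear_combination (mul_eq_zero.1 this).resolve_left hq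
  have hu : W * u = (1 - q - r) * r * (1 - q) := by
    have : (1 - r) * (W * u - (1 - q - r) * r * (1 - q)) = 0 := by
      rw [hW_def, perspectorDenom]
      linear_combination (-1 + q + 2 * r - 2 * q * r - 2 * r ^ 2) * h1 - r * (1 - q) * h2
    linear_combination (mul_eq_zero.1 this).resolve_left hr1
  have hW : W ≠ 0 := fun h0 => by
    simp [h0, hp, hr, hq1] at hu
  have hv : W * v = (1 - q - r) * q * (1 - r) := by
    have : r * (1 - q) * (W * v - (1 - q - r) * q * (1 - r)) = 0 := by
      linear_combination W * h1 + q * (1 - r) * hu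
    linear_combination (mul_eq_zero.1 this).resolve_left (mul_ne_zero hr hq1)
  refine ⟨hW, hX'.trans (Matrix.vec2_eq ?_ ?_)⟩
  · rw [eq_div_iff hW, mul_comm, hu]
  · rw [eq_div_iff hW, mul_comm, hv]

end Isotomic

theorem stmt_16_general (A B C P D E F D0 E0 F0 D3 E3 F3 X' : Pt) (T T' : Pt →ᵃ[ℝ] Pt)
(hABC : AffineIndependent ℝ ![A, B, C])
    (hPa : ¬ Collinear ℝ {B, C, P})
    (hPb : ¬ Collinear ℝ {C, A, P})
    (hPc : ¬ Collinear ℝ {A, B, P})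
    (hD : Collinear ℝ {B, C, D}) (hDcev : Collinear ℝ {A, P, D})
    (hE : Collinear ℝ {C, A, E}) (hEcev : Collinear ℝ {B, P, E})
    (hF : Collinear ℝ {A, B, F}) (hFcev : Collinear ℝ {C, P, F})
    (hD0 : D0 = midpoint ℝ B C) (hE0 : E0 = midpoint ℝ C A) (hF0 : F0 = midpoint ℝ A B)
(hD3 : D3 = Equiv.pointReflection D0 D)
    (hE3 : E3 = Equiv.pointReflection E0 E)
    (hF3 : F3 = Equiv.pointReflection F0 F)
    (hTA : T A = D) (hTB : T B = E) (hTC : T C = F)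
    (hT'A : T' A = D3) (hT'B : T' B = E3) (hT'C : T' C = F3)
    (hX'a : Collinear ℝ {A, T' D, X'})
    (hX'b : Collinear ℝ {B, T' E, X'}) :
    Collinear ℝ {A, T D3, T X'} ∧ Collinear ℝ {B, T E3, T X'} ∧
      Collinear ℝ {C, T F3, T X'} := by
  subst hD3 hE3 hF3 hD0 hE0 hF0
  have hV : finrank ℝ Pt = 2 := finrank_euclideanSpace_fin
  obtain ⟨q, r, hP⟩ : ∃ q r, triangleCoords hABC hV P = ![q, r] :=
    ⟨_, _, (FinVec.etaExpand_eq _).symm⟩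
  obtain ⟨hq, hr, hp⟩ := triangleCoords_ne_zero_of_not_collinear hABC hV hP hPa hPb hPc
  obtain ⟨hqr, hcD⟩ := triangleCoords_cevianTrace_BC hABC hV hP hq hD hDcev
  obtain ⟨hq1, hcE⟩ := triangleCoords_cevianTrace_CA hABC hV hP hr hE hEcev
  obtain ⟨hr1, hcF⟩ := triangleCoords_cevianTrace_AB hABC hV hP hq hF hFcev
  obtain ⟨hW, hX'⟩ := triangleCoords_perspector hABC hV hq hr hp hqr hq1 hr1 hcD hcE hcF T'
    hT'A hT'B hT'C hX'a hX'b
  have hTX' : triangleCoords hABC hV (T X') =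
      ![q ^ 2 * (1 - q) / perspectorDenom q r, r ^ 2 * (1 - r) / perspectorDenom q r] := by
    rw [triangleCoords_map hABC hV T, hTA, hTB, hTC, hcD, hcE, hcF, hX']
    ext i
    fin_cases i <;> simp only [Fin.zero_eta, Fin.mk_one, Pi.add_apply, Pi.sub_apply,
      Pi.smul_apply, smul_eq_mul, Matrix.cons_val_zero, Matrix.cons_val_one,
      Matrix.cons_val_fin_one] <;> field_simp <;> rw [perspectorDenom] <;> ring
  have hcD3 := (triangleCoords hABC hV).map_pointReflection_midpoint_s16 B C D
  have hcE3 := (triangleCoords hABC hV).map_pointReflection_midpoint_s16 C A E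
  have hcF3 := (triangleCoords hABC hV).map_pointReflection_midpoint_s16 A B F
  simp only [collinear_iff_triangleCoords hABC hV, hTX']
  simp only [triangleCoords_map hABC hV T, hTA, hTB, hTC, hcD3, hcE3, hcF3, hcD, hcE, hcF,
    triangleCoords_vertex_zero, triangleCoords_vertex_one, triangleCoords_vertex_two,
    Pi.add_apply, Pi.sub_apply, Pi.smul_apply, smul_eq_mul, Matrix.cons_val_zero,
    Matrix.cons_val_one, Matrix.cons_val_fin_one]
  refine ⟨?_, ?_, ?_⟩ <;> field_simp <;> rw [perspectorDenom] <;> ring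

theorem stmt_16 (A B C G P D E F D0 E0 F0 D3 E3 F3 P' X' : Pt) (T T' : Pt →ᵃ[ℝ] Pt)
(hABC : AffineIndependent ℝ ![A, B, C])
    (hG : G = (1/3 : ℝ) • (A + B + C))
    (hPa : ¬ Collinear ℝ {B, C, P})
    (hPb : ¬ Collinear ℝ {C, A, P})
    (hPc : ¬ Collinear ℝ {A, B, P})
    (hD : Collinear ℝ {B, C, D}) (hDcev : Collinear ℝ {A, P, D})
    (hE : Collinear ℝ {C, A, E}) (hEcev : Collinear ℝ {B, P, E})
    (hF : Collinear ℝ {A, B, F}) (hFcev : Collinear ℝ {C, P, F})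
    (hD0 : D0 = midpoint ℝ B C) (hE0 : E0 = midpoint ℝ C A) (hF0 : F0 = midpoint ℝ A B)
(hD3 : D3 = Equiv.pointReflection D0 D)
    (hE3 : E3 = Equiv.pointReflection E0 E)
    (hF3 : F3 = Equiv.pointReflection F0 F)
    (hP'a : Collinear ℝ {A, D3, P'})
    (hP'b : Collinear ℝ {B, E3, P'})
    (hP'c : Collinear ℝ {C, F3, P'})
    (hTA : T A = D) (hTB : T B = E) (hTC : T C = F)
    (hT'A : T' A = D3) (hT'B : T' B = E3) (hT'C : T' C = F3)
    (hX'a : Collinear ℝ {A, T' D, X'})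
    (hX'b : Collinear ℝ {B, T' E, X'})
    (hX'c : Collinear ℝ {C, T' F, X'}) :
    Collinear ℝ {A, T D3, T X'} ∧ Collinear ℝ {B, T E3, T X'} ∧
      Collinear ℝ {C, T F3, T X'} :=
  stmt_16_general A B C P D E F D0 E0 F0 D3 E3 F3 X' T T' hABC hPa hPb hPc hD hDcev hE hEcev hF
    hFcev hD0 hE0 hF0 hD3 hE3 hF3 hTA hTB hTC hT'A hT'B hT'C hX'a hX'b
end

section
/- Assume A', B', C' are affinely independent, and that {A', Q, A}, {B', Q, B}, {C', Q, C} are each collinear (so ABC is the cevian triangle of Q with respect to A'B'C'). Let A* be the reflection of A in the midpoint of B'C', B* the reflection of B in the midpoint of A'C', C* the reflection of C in the midpoint of A'B', and let Q* be a point with {A', A*, Q*}, {B', B*, Q*}, {C', C*, Q*} each collinear (the isotomic conjugate of Q with respect to A'B'C'). Let G* be the centroid of A', B', C'. Then K(P) equals the image of Q* under the homothety with center G* and ratio -1/2; that is, Q' = K(P) is the isotomcomplement of Q with respect to the anticevian triangle A'B'C' of Q. -/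
/-!
Take affine coordinates with origin `A` and axes `B - A`, `C - A`, and let `P = (p, q)`.
Collinearity and parallelism become the vanishing of 2 × 2 cross products, so `D, E, F`, then
`A', B', C'`, then `Q*` are each the intersection of two non-parallel lines and can be solved for
in turn, e.g. `A' = ((1 - p) / 2q, (1 - q) / 2p)`. The outcome is
`Q* = P + (A' + B' + C') - (A + B + C)`, i.e. `Q* - 3 G* = P - 3 G`, which is exactly the
equality of the images of `P` and `Q*` under the two homotheties of ratio `-1/2`.
-/

open EuclideanGeometry Affine

local notation "Pt" => EuclideanSpace ℝ (Fin 2)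

section LinearAlgebra

variable {k V P : Type*} [Field k] [AddCommGroup V] [Module k V] [AddTorsor V P]

theorem LinearIndependent.pair_smul_add_smul_iff {u v : V} (huv : LinearIndependent k ![u, v])
    {a b c d : k} :
    LinearIndependent k ![a • u + b • v, c • u + d • v] ↔ a * d - b * c ≠ 0 := by
  have hrows : ![a • u + b • v, c • u + d • v] =
      Fintype.linearCombination k ![u, v] ∘ (!![a, b; c, d]).row := by
    funext i; fin_cases i <;> simp [Fintype.linearCombination_apply, Fin.sum_univ_two]
  have hker : LinearMap.ker (Fintype.linearCombination k ![u, v]) = ⊥ :=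
    LinearMap.ker_eq_bot.mpr (linearIndependent_iff_injective_fintypeLinearCombination.mp huv)
  rw [hrows, LinearMap.linearIndependent_iff _ hker, Matrix.linearIndependent_rows_iff_isUnit,
    Matrix.isUnit_iff_isUnit_det, Matrix.det_fin_two_of, isUnit_iff_ne_zero]

theorem affineIndependent_iff_linearIndependent_vsub_fin_three {X Y Z : P} :
    AffineIndependent k ![X, Y, Z] ↔ LinearIndependent k ![Y -ᵥ X, Z -ᵥ X] := by
  rw [affineIndependent_iff_linearIndependent_vsub k _ 0,
    ← linearIndependent_equiv (finSuccAboveEquiv 0)]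
  congr! 2
  funext i
  fin_cases i <;> rfl

theorem collinear_iff_not_linearIndependent_vsub {X Y Z : P} :
    Collinear k {X, Y, Z} ↔ ¬ LinearIndependent k ![Y -ᵥ X, Z -ᵥ X] := by
  rw [collinear_iff_not_affineIndependent_set,
    affineIndependent_iff_linearIndependent_vsub_fin_three]

theorem AffineSubspace.Parallel.not_linearIndependent_vsub {X Y Z W : P}
    (h : line[k, X, Y] ∥ line[k, Z, W]) : ¬ LinearIndependent k ![Y -ᵥ X, W -ᵥ Z] := by
  have hmem : Y -ᵥ X ∈ k ∙ (W -ᵥ Z) := by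
    rw [← vectorSpan_pair_rev, ← direction_affineSpan, ← h.direction_eq, direction_affineSpan]
    exact vsub_mem_vectorSpan k (by simp) (by simp)
  obtain ⟨t, ht⟩ := Submodule.mem_span_singleton.mp hmem
  intro hli
  exact one_ne_zero (hli.eq_zero_of_pair (s := 1) (t := -t) (by rw [← ht]; simp)).1

theorem LinearIndependent.exists_eq_smul_add_smul_add [FiniteDimensional k V] {u v : V}
    (huv : LinearIndependent k ![u, v]) (hV : Module.finrank k V = 2) (O X : V) :
    ∃ x y : k, X = x • u + y • v + O := by
  have htop : Submodule.span k {u, v} = ⊤ := by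
    simpa [Set.pair_comm] using huv.span_eq_top_of_card_eq_finrank' (by simp [hV])
  have hmem : X - O ∈ Submodule.span k {u, v} := htop ▸ Submodule.mem_top
  obtain ⟨x, y, h⟩ := Submodule.mem_span_pair.mp hmem
  exact ⟨x, y, by rw [h, sub_add_cancel]⟩

end LinearAlgebra

theorem Equiv.pointReflection_midpoint_eq_add_sub {R V : Type*} [Ring R] [Invertible (2 : R)]
    [AddCommGroup V] [Module R V] (x y z : V) :
    Equiv.pointReflection (midpoint R x y) z = x + y - z := by
  rw [Equiv.pointReflection_apply, vsub_eq_sub, vadd_eq_add, ← midpoint_add_self R x y]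
  abel

section Frame

variable {k V : Type*} [Field k] [AddCommGroup V] [Module k V] {u v O : V}

theorem collinear_iff_cross_eq_zero (huv : LinearIndependent k ![u, v]) {X Y Z : V}
    {x₁ y₁ x₂ y₂ x₃ y₃ : k} (hX : X = x₁ • u + y₁ • v + O) (hY : Y = x₂ • u + y₂ • v + O)
    (hZ : Z = x₃ • u + y₃ • v + O) :
    Collinear k {X, Y, Z} ↔ (x₃ - x₁) * (y₂ - y₁) - (y₃ - y₁) * (x₂ - x₁) = 0 := by
  rw [collinear_iff_not_linearIndependent_vsub, vsub_eq_sub, vsub_eq_sub,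
    show Y - X = (x₂ - x₁) • u + (y₂ - y₁) • v by rw [hX, hY]; module,
    show Z - X = (x₃ - x₁) • u + (y₃ - y₁) • v by rw [hX, hZ]; module,
    huv.pair_smul_add_smul_iff, not_not]
  constructor <;> intro h <;> linear_combination -h

theorem AffineSubspace.Parallel.cross_eq_zero
    (huv : LinearIndependent k ![u, v]) {X Y Z W : V} {x₁ y₁ x₂ y₂ x₃ y₃ x₄ y₄ : k}
    (hX : X = x₁ • u + y₁ • v + O) (hY : Y = x₂ • u + y₂ • v + O)
    (hZ : Z = x₃ • u + y₃ • v + O) (hW : W = x₄ • u + y₄ • v + O)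
    (h : line[k, X, Y] ∥ line[k, Z, W]) :
    (x₂ - x₁) * (y₄ - y₃) - (y₂ - y₁) * (x₄ - x₃) = 0 := by
  have := h.not_linearIndependent_vsub
  rwa [vsub_eq_sub, vsub_eq_sub,
    show Y - X = (x₂ - x₁) • u + (y₂ - y₁) • v by rw [hX, hY]; module,
    show W - Z = (x₄ - x₃) • u + (y₄ - y₃) • v by rw [hZ, hW]; module,
    huv.pair_smul_add_smul_iff, not_not] at this

end Frame

/-- `(x, y)` and `(x₀, y₀)` both lie on the line through `(a₁, a₂)` with direction `u` and on the
line through `(b₁, b₂)` with direction `w`. -/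
theorem eq_and_eq_of_cross_eq_zero {k : Type*} [Field k]
    {x y x₀ y₀ a₁ a₂ b₁ b₂ u₁ u₂ w₁ w₂ : k}
    (h₁ : (x - a₁) * u₂ - (y - a₂) * u₁ = 0) (h₂ : (x - b₁) * w₂ - (y - b₂) * w₁ = 0)
    (h₀₁ : (x₀ - a₁) * u₂ - (y₀ - a₂) * u₁ = 0) (h₀₂ : (x₀ - b₁) * w₂ - (y₀ - b₂) * w₁ = 0)
    (huw : u₁ * w₂ - u₂ * w₁ ≠ 0) : x = x₀ ∧ y = y₀ := by
  have hx : (u₁ * w₂ - u₂ * w₁) * (x - x₀) = 0 := by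
    linear_combination u₁ * (h₂ - h₀₂) - w₁ * (h₁ - h₀₁)
  have hy : (u₁ * w₂ - u₂ * w₁) * (y - y₀) = 0 := by
    linear_combination u₂ * (h₂ - h₀₂) - w₂ * (h₁ - h₀₁)
  exact ⟨sub_eq_zero.mp ((mul_eq_zero.mp hx).resolve_left huw),
    sub_eq_zero.mp ((mul_eq_zero.mp hy).resolve_left huw)⟩

section Triangle

variable {k V : Type*} [Field k] [AddCommGroup V] [Module k V] {A B C : V}

theorem frame_coords_A : A = (0 : k) • (B - A) + (0 : k) • (C - A) + A := by module
theorem frame_coords_B : B = (1 : k) • (B - A) + (0 : k) • (C - A) + A := by module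
theorem frame_coords_C : C = (0 : k) • (B - A) + (1 : k) • (C - A) + A := by module

variable (hABC : LinearIndependent k ![B - A, C - A]) {P : V} {p q : k}
  (hP : P = p • (B - A) + q • (C - A) + A)
include hABC hP

theorem coords_ne_zero_of_not_collinear (hPa : ¬ Collinear k {B, C, P})
    (hPb : ¬ Collinear k {C, A, P}) (hPc : ¬ Collinear k {A, B, P}) :
    p ≠ 0 ∧ q ≠ 0 ∧ 1 - p - q ≠ 0 := by
  refine ⟨fun h => hPb ?_, fun h => hPc ?_, fun h => hPa ?_⟩
  · exact (collinear_iff_cross_eq_zero hABC frame_coords_C frame_coords_A hP).mpr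
      (by rw [h]; ring)
  · exact (collinear_iff_cross_eq_zero hABC frame_coords_A frame_coords_B hP).mpr
      (by rw [h]; ring)
  · exact (collinear_iff_cross_eq_zero hABC frame_coords_B frame_coords_C hP).mpr
      (by linear_combination -h)

theorem cevianTrace_coords_BC {D : V} {x y : k} (hD : D = x • (B - A) + y • (C - A) + A)
    (hq : q ≠ 0) (hBCD : Collinear k {B, C, D}) (hAPD : Collinear k {A, P, D}) :
    p + q ≠ 0 ∧ x = p / (p + q) ∧ y = q / (p + q) := by
  have e₁ := (collinear_iff_cross_eq_zero hABC frame_coords_B frame_coords_C hD).mp hBCD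
  have e₂ := (collinear_iff_cross_eq_zero hABC frame_coords_A hP hD).mp hAPD
  have hpq : p + q ≠ 0 := fun h => hq (by linear_combination -q * e₁ + e₂ + y * h)
  refine ⟨hpq, eq_and_eq_of_cross_eq_zero e₁ e₂ ?_ ?_ ?_⟩
  · field_simp; ring
  · field_simp; ring
  · intro h; apply hpq; linear_combination -h

theorem cevianTrace_coords_CA {E : V} {x y : k} (hE : E = x • (B - A) + y • (C - A) + A)
    (hq : q ≠ 0) (hCAE : Collinear k {C, A, E}) (hBPE : Collinear k {B, P, E}) :
    1 - p ≠ 0 ∧ x = 0 ∧ y = q / (1 - p) := by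
  have e₁ := (collinear_iff_cross_eq_zero hABC frame_coords_C frame_coords_A hE).mp hCAE
  have e₂ := (collinear_iff_cross_eq_zero hABC frame_coords_B hP hE).mp hBPE
  have h1p : 1 - p ≠ 0 := fun h => hq (by linear_combination -q * e₁ - e₂ + y * h)
  refine ⟨h1p, eq_and_eq_of_cross_eq_zero e₁ e₂ ?_ ?_ ?_⟩
  · ring
  · field_simp; ring
  · intro h; apply h1p; linear_combination -h

theorem cevianTrace_coords_AB {F : V} {x y : k} (hF : F = x • (B - A) + y • (C - A) + A)
    (hp : p ≠ 0) (hABF : Collinear k {A, B, F}) (hCPF : Collinear k {C, P, F}) :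
    1 - q ≠ 0 ∧ x = p / (1 - q) ∧ y = 0 := by
  have e₁ := (collinear_iff_cross_eq_zero hABC frame_coords_A frame_coords_B hF).mp hABF
  have e₂ := (collinear_iff_cross_eq_zero hABC frame_coords_C hP hF).mp hCPF
  have h1q : 1 - q ≠ 0 := fun h => hp (by linear_combination e₂ + x * h - p * e₁)
  refine ⟨h1q, eq_and_eq_of_cross_eq_zero e₁ e₂ ?_ ?_ ?_⟩
  · ring
  · field_simp; ring
  · intro h; apply h1q; linear_combination -h

end Triangle

section Anticevian

variable {k V : Type*} [Field k] [NeZero (2 : k)] [AddCommGroup V] [Module k V] {A B C : V}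
  (hABC : LinearIndependent k ![B - A, C - A]) {p q : k} {D E F : V}
  (hD : D = (p / (p + q)) • (B - A) + (q / (p + q)) • (C - A) + A)
  (hE : E = (0 : k) • (B - A) + (q / (1 - p)) • (C - A) + A)
  (hF : F = (p / (1 - q)) • (B - A) + (0 : k) • (C - A) + A)
include hABC hD hE hF

theorem anticevian_coords_A (hp : p ≠ 0) (hq : q ≠ 0) (hpq : p + q ≠ 0) (h1p : 1 - p ≠ 0)
    (h1q : 1 - q ≠ 0) (hDEF : ¬ Collinear k {D, E, F}) {A' : V} {x y : k}
    (hA' : A' = x • (B - A) + y • (C - A) + A)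
    (hBA' : line[k, B, A'] ∥ line[k, D, F]) (hCA' : line[k, C, A'] ∥ line[k, D, E]) :
    x = (1 - p) / (2 * q) ∧ y = (1 - q) / (2 * p) := by
  have e₁ := hBA'.cross_eq_zero hABC frame_coords_B hA' hD hF
  have e₂ := hCA'.cross_eq_zero hABC frame_coords_C hA' hD hE
  refine eq_and_eq_of_cross_eq_zero e₁ e₂ ?_ ?_ ?_
  · field_simp; ring
  · field_simp; ring
  · exact mt (collinear_iff_cross_eq_zero hABC hD hE hF).mpr hDEF

theorem anticevian_coords_B (hq : q ≠ 0) (hpq : p + q ≠ 0) (h1p : 1 - p ≠ 0)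
    (h1q : 1 - q ≠ 0) (hr : 1 - p - q ≠ 0) (hDEF : ¬ Collinear k {D, E, F}) {B' : V} {x y : k}
    (hB' : B' = x • (B - A) + y • (C - A) + A)
    (hAB' : line[k, A, B'] ∥ line[k, E, F]) (hCB' : line[k, C, B'] ∥ line[k, D, E]) :
    x = -(p * (1 - p)) / (2 * q * (1 - p - q)) ∧ y = (1 - q) / (2 * (1 - p - q)) := by
  have e₁ := hAB'.cross_eq_zero hABC frame_coords_A hB' hE hF
  have e₂ := hCB'.cross_eq_zero hABC frame_coords_C hB' hD hE
  refine eq_and_eq_of_cross_eq_zero e₁ e₂ ?_ ?_ ?_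
  · field_simp; ring
  · field_simp; ring
  · intro h
    exact hDEF ((collinear_iff_cross_eq_zero hABC hD hE hF).mpr (by linear_combination h))

theorem anticevian_coords_C (hp : p ≠ 0) (hpq : p + q ≠ 0) (h1p : 1 - p ≠ 0)
    (h1q : 1 - q ≠ 0) (hr : 1 - p - q ≠ 0) (hDEF : ¬ Collinear k {D, E, F}) {C' : V} {x y : k}
    (hC' : C' = x • (B - A) + y • (C - A) + A)
    (hAC' : line[k, A, C'] ∥ line[k, E, F]) (hBC' : line[k, B, C'] ∥ line[k, D, F]) :
    x = (1 - p) / (2 * (1 - p - q)) ∧ y = -(q * (1 - q)) / (2 * p * (1 - p - q)) := by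
  have e₁ := hAC'.cross_eq_zero hABC frame_coords_A hC' hE hF
  have e₂ := hBC'.cross_eq_zero hABC frame_coords_B hC' hD hF
  refine eq_and_eq_of_cross_eq_zero e₁ e₂ ?_ ?_ ?_
  · field_simp; ring
  · field_simp; ring
  · intro h
    exact hDEF ((collinear_iff_cross_eq_zero hABC hD hE hF).mpr (by linear_combination h))

end Anticevian

theorem isotomicConjugate_anticevian_eq {k V : Type*} [Field k] [NeZero (2 : k)] [AddCommGroup V]
    [Module k V] {A B C : V} (hABC : LinearIndependent k ![B - A, C - A]) {P A' B' C' Q : V}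
    {p q a₁ a₂ b₁ b₂ c₁ c₂ x y : k} (hp : p ≠ 0) (hq : q ≠ 0) (h1q : 1 - q ≠ 0)
    (hr : 1 - p - q ≠ 0) (hP : P = p • (B - A) + q • (C - A) + A)
    (hA' : A' = a₁ • (B - A) + a₂ • (C - A) + A) (hB' : B' = b₁ • (B - A) + b₂ • (C - A) + A)
    (hC' : C' = c₁ • (B - A) + c₂ • (C - A) + A) (hQ : Q = x • (B - A) + y • (C - A) + A)
    (ha : a₁ = (1 - p) / (2 * q) ∧ a₂ = (1 - q) / (2 * p))
    (hb : b₁ = -(p * (1 - p)) / (2 * q * (1 - p - q)) ∧ b₂ = (1 - q) / (2 * (1 - p - q)))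
    (hc : c₁ = (1 - p) / (2 * (1 - p - q)) ∧ c₂ = -(q * (1 - q)) / (2 * p * (1 - p - q)))
    (hA'Q : Collinear k {A', B' + C' - A, Q}) (hB'Q : Collinear k {B', A' + C' - B, Q}) :
    Q = P + (A' + B' + C') - (A + B + C) := by
  have hAstar : B' + C' - A = (b₁ + c₁) • (B - A) + (b₂ + c₂) • (C - A) + A := by
    rw [hB', hC']; module
  have hBstar : A' + C' - B = (a₁ + c₁ - 1) • (B - A) + (a₂ + c₂) • (C - A) + A := by
    rw [hA', hC']; module
  have e₁ := (collinear_iff_cross_eq_zero hABC hA' hAstar hQ).mp hA'Q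
  have e₂ := (collinear_iff_cross_eq_zero hABC hB' hBstar hQ).mp hB'Q
  suffices hxy : x = a₁ + b₁ + c₁ - 1 + p ∧ y = a₂ + b₂ + c₂ - 1 + q by
    rw [hQ, hP, hA', hB', hC', hxy.1, hxy.2]; module
  refine eq_and_eq_of_cross_eq_zero e₁ e₂ ?_ ?_ ?_
  all_goals
    obtain ⟨rfl, rfl⟩ := ha
    obtain ⟨rfl, rfl⟩ := hb
    obtain ⟨rfl, rfl⟩ := hc
  · field_simp; ring
  · field_simp; ring
  · refine ne_of_eq_of_ne (b := (1 - q) / (2 * p * (1 - p - q))) ?_ ?_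
    · field_simp; ring
    · exact div_ne_zero h1q (mul_ne_zero (mul_ne_zero two_ne_zero hp) hr)

theorem stmt_18_general (A B C G P D E F : Pt)
    (A' B' C' Astar Bstar Qstar Gstar : Pt)
(hABC : AffineIndependent ℝ ![A, B, C])
    (hG : G = (1/3 : ℝ) • (A + B + C))
    (hPa : ¬ Collinear ℝ {B, C, P})
    (hPb : ¬ Collinear ℝ {C, A, P})
    (hPc : ¬ Collinear ℝ {A, B, P})
    (hD : Collinear ℝ {B, C, D}) (hDcev : Collinear ℝ {A, P, D})
    (hE : Collinear ℝ {C, A, E}) (hEcev : Collinear ℝ {B, P, E})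
    (hF : Collinear ℝ {A, B, F}) (hFcev : Collinear ℝ {C, P, F})
    (hDEF : AffineIndependent ℝ ![D, E, F])
    (hBA' : line[ℝ, B, A'] ∥ line[ℝ, D, F])
    (hCA' : line[ℝ, C, A'] ∥ line[ℝ, D, E])
    (hAB' : line[ℝ, A, B'] ∥ line[ℝ, E, F])
    (hCB' : line[ℝ, C, B'] ∥ line[ℝ, D, E])
    (hAC' : line[ℝ, A, C'] ∥ line[ℝ, E, F])
    (hBC' : line[ℝ, B, C'] ∥ line[ℝ, D, F])
    (hAstar : Astar = Equiv.pointReflection (midpoint ℝ B' C') A)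
    (hBstar : Bstar = Equiv.pointReflection (midpoint ℝ A' C') B)
    (hQsa : Collinear ℝ {A', Astar, Qstar})
    (hQsb : Collinear ℝ {B', Bstar, Qstar})
    (hGstar : Gstar = (1/3 : ℝ) • (A' + B' + C')) :
    AffineMap.homothety G (-1/2 : ℝ) P = AffineMap.homothety Gstar (-1/2 : ℝ) Qstar := by
  have hABC' : LinearIndependent ℝ ![B - A, C - A] := by
    simpa only [vsub_eq_sub] using affineIndependent_iff_linearIndependent_vsub_fin_three.mp hABC
  have coords := hABC'.exists_eq_smul_add_smul_add finrank_euclideanSpace_fin A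
  obtain ⟨p, q, hP'⟩ := coords P
  obtain ⟨d₁, d₂, hD'⟩ := coords D
  obtain ⟨e₁, e₂, hE'⟩ := coords E
  obtain ⟨f₁, f₂, hF'⟩ := coords F
  obtain ⟨a₁, a₂, hA'⟩ := coords A'
  obtain ⟨b₁, b₂, hB'⟩ := coords B'
  obtain ⟨c₁, c₂, hC'⟩ := coords C'
  obtain ⟨x, y, hQ'⟩ := coords Qstar
  obtain ⟨hp, hq, hr⟩ := coords_ne_zero_of_not_collinear hABC' hP' hPa hPb hPc
  obtain ⟨hpq, rfl, rfl⟩ := cevianTrace_coords_BC hABC' hP' hD' hq hD hDcev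
  obtain ⟨h1p, rfl, rfl⟩ := cevianTrace_coords_CA hABC' hP' hE' hq hE hEcev
  obtain ⟨h1q, rfl, rfl⟩ := cevianTrace_coords_AB hABC' hP' hF' hp hF hFcev
  have hDEF' := affineIndependent_iff_not_collinear_set.mp hDEF
  have ha := anticevian_coords_A hABC' hD' hE' hF' hp hq hpq h1p h1q hDEF' hA' hBA' hCA'
  have hb := anticevian_coords_B hABC' hD' hE' hF' hq hpq h1p h1q hr hDEF' hB' hAB' hCB'
  have hc := anticevian_coords_C hABC' hD' hE' hF' hp hpq h1p h1q hr hDEF' hC' hAC' hBC'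
  rw [hAstar, Equiv.pointReflection_midpoint_eq_add_sub] at hQsa
  rw [hBstar, Equiv.pointReflection_midpoint_eq_add_sub] at hQsb
  have hQstar := isotomicConjugate_anticevian_eq hABC' hp hq h1q hr hP' hA' hB' hC' hQ' ha hb hc
    hQsa hQsb
  rw [AffineMap.homothety_apply, AffineMap.homothety_apply, hQstar, hG, hGstar]
  simp only [vsub_eq_sub, vadd_eq_add]
  module

theorem stmt_18 (A B C G P D E F D0 E0 F0 D3 E3 F3 P' Q : Pt)
    (A' B' C' Astar Bstar Cstar Qstar Gstar : Pt)
(hABC : AffineIndependent ℝ ![A, B, C])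
    (hG : G = (1/3 : ℝ) • (A + B + C))
    (hPa : ¬ Collinear ℝ {B, C, P})
    (hPb : ¬ Collinear ℝ {C, A, P})
    (hPc : ¬ Collinear ℝ {A, B, P})
    (hD : Collinear ℝ {B, C, D}) (hDcev : Collinear ℝ {A, P, D})
    (hE : Collinear ℝ {C, A, E}) (hEcev : Collinear ℝ {B, P, E})
    (hF : Collinear ℝ {A, B, F}) (hFcev : Collinear ℝ {C, P, F})
    (hD0 : D0 = midpoint ℝ B C) (hE0 : E0 = midpoint ℝ C A) (hF0 : F0 = midpoint ℝ A B)
(hD3 : D3 = Equiv.pointReflection D0 D)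
    (hE3 : E3 = Equiv.pointReflection E0 E)
    (hF3 : F3 = Equiv.pointReflection F0 F)
(hP'a : Collinear ℝ {A, D3, P'})
    (hP'b : Collinear ℝ {B, E3, P'})
    (hP'c : Collinear ℝ {C, F3, P'})
    (hQ : Q = AffineMap.homothety G (-1/2 : ℝ) P')
    (hDEF : AffineIndependent ℝ ![D, E, F])
    (hA'B : A' ≠ B) (hA'C : A' ≠ C)
    (hBA' : line[ℝ, B, A'] ∥ line[ℝ, D, F])
    (hCA' : line[ℝ, C, A'] ∥ line[ℝ, D, E])
    (hB'A : B' ≠ A) (hB'C : B' ≠ C)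
    (hAB' : line[ℝ, A, B'] ∥ line[ℝ, E, F])
    (hCB' : line[ℝ, C, B'] ∥ line[ℝ, D, E])
    (hC'A : C' ≠ A) (hC'B : C' ≠ B)
    (hAC' : line[ℝ, A, C'] ∥ line[ℝ, E, F])
    (hBC' : line[ℝ, B, C'] ∥ line[ℝ, D, F])
    (hA'B'C' : AffineIndependent ℝ ![A', B', C'])
    (hcevA : Collinear ℝ {A', Q, A}) (hcevB : Collinear ℝ {B', Q, B})
    (hcevC : Collinear ℝ {C', Q, C})
    (hAstar : Astar = Equiv.pointReflection (midpoint ℝ B' C') A)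
    (hBstar : Bstar = Equiv.pointReflection (midpoint ℝ A' C') B)
    (hCstar : Cstar = Equiv.pointReflection (midpoint ℝ A' B') C)
    (hQsa : Collinear ℝ {A', Astar, Qstar})
    (hQsb : Collinear ℝ {B', Bstar, Qstar})
    (hQsc : Collinear ℝ {C', Cstar, Qstar})
    (hGstar : Gstar = (1/3 : ℝ) • (A' + B' + C')) :
    AffineMap.homothety G (-1/2 : ℝ) P = AffineMap.homothety Gstar (-1/2 : ℝ) Qstar :=
  stmt_18_general A B C G P D E F A' B' C' Astar Bstar Qstar Gstar hABC hG hPa hPb hPc hD hDcev hE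
    hEcev hF hFcev hDEF hBA' hCA' hAB' hCB' hAC' hBC' hAstar hBstar hQsa hQsb hGstar
end

section
/- The lines AD3, BE3, CF3 are pairwise parallel (equivalently, P lies on the Steiner circumellipse of ABC, so that its isotomic conjugate is an infinite point) if and only if the composite affine map T ∘ T' equals the homothety with center G and ratio -2 (the inverse K⁻¹ of the complement map). -/
open EuclideanGeometry Affine

local notation "Pt" => EuclideanSpace ℝ (Fin 2)

/-!
Write `P = a A + b B + c C` in normalized barycentric coordinates. Then
`(b + c) D = b B + c C`, `(c + a) E = c C + a A`, `(a + b) F = a A + b B`, and reflecting in the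
midpoints swaps the two weights: `(b + c) D₃ = c B + b C`, etc. Comparing barycentric coordinates,
each of the three parallelisms, and each of the equations `T (T' A) = K⁻¹ A = B + C - A` (and its
cyclic versions), is equivalent to `a b + b c + c a = 0`, the Steiner circumellipse. As `A, B, C`
span the plane, those three equations together say `T ∘ T' = K⁻¹`.
-/

theorem Matrix.range_cons_cons_cons_empty {α : Type*} (x y z : α) (u : Fin 0 → α) :
    Set.range (vecCons x (vecCons y (vecCons z u))) = {x, y, z} := by
  rw [Matrix.range_cons, Matrix.range_cons_cons_empty, Set.singleton_union]

variable {k V W : Type*} [Field k] [AddCommGroup V] [Module k V] [AddCommGroup W] [Module k W]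

theorem AffineMap.smul_apply_eq_of_smul_eq (f : V →ᵃ[k] W) {x y z : V} {r s t : k}
    (hr : s + t = r) (h : r • x = s • y + t • z) : r • f x = s • f y + t • f z := by
  have key : f.linear (s • (x - y) + t • (x - z)) = 0 := by
    rw [show s • (x - y) + t • (x - z) = 0 by linear_combination (norm := module) h + hr • x,
      map_zero]
  rw [map_add, map_smul, map_smul, ← vsub_eq_sub, ← vsub_eq_sub, f.linearMap_vsub,
    f.linearMap_vsub, vsub_eq_sub, vsub_eq_sub] at key
  linear_combination (norm := module) key - hr • f x

theorem affineSpan_pair_parallel_iff_exists_unit_smul {p₁ p₂ p₃ p₄ : V} :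
    line[k, p₁, p₂] ∥ line[k, p₃, p₄] ↔ ∃ r : kˣ, r • (p₁ - p₂) = p₃ - p₄ := by
  rw [AffineSubspace.affineSpan_pair_parallel_iff_vectorSpan_eq, vectorSpan_pair, vectorSpan_pair,
    Submodule.span_singleton_eq_span_singleton]
  rfl

theorem AffineMap.homothety_neg_two_apply_of_three_smul_eq {G X Y Z : V}
    (hG : (3 : k) • G = X + Y + Z) : AffineMap.homothety G (-2 : k) X = Y + Z - X := by
  rw [AffineMap.homothety_apply, vsub_eq_sub, vadd_eq_add]
  linear_combination (norm := module) hG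

variable {A B C : V}

theorem affineSpan_eq_top_of_finrank_eq_two (hV : Module.finrank k V = 2)
    (h : AffineIndependent k ![A, B, C]) : affineSpan k {A, B, C} = ⊤ := by
  have : Module.Finite k V := Module.finite_of_finrank_eq_succ hV
  rw [← Matrix.range_cons_cons_cons_empty]
  exact h.affineSpan_eq_top_iff_card_eq_finrank_add_one.2 (by simp [hV])

theorem exists_eq_smul_add_smul_add_smul (h : affineSpan k {A, B, C} = ⊤) (P : V) :
    ∃ a b c : k, a + b + c = 1 ∧ P = a • A + b • B + c • C := by
  have hP : P ∈ affineSpan k (Set.range ![A, B, C]) := by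
    rw [Matrix.range_cons_cons_cons_empty, h]
    trivial
  obtain ⟨w, hw, rfl⟩ := eq_affineCombination_of_mem_affineSpan_of_fintype hP
  refine ⟨w 0, w 1, w 2, by simpa [Fin.sum_univ_three] using hw, ?_⟩
  rw [Finset.affineCombination_eq_linear_combination _ _ _ hw]
  simp [Fin.sum_univ_three]

theorem eq_zero_of_smul_add_smul_add_smul_eq_zero (h : ¬ Collinear k {A, B, C}) {x y z : k}
    (hs : x + y + z = 0) (he : x • A + y • B + z • C = 0) : x = 0 ∧ y = 0 ∧ z = 0 := by
  have hw := (affineIndependent_iff_of_fintype k _).1 (affineIndependent_iff_not_collinear_set.2 h)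
    ![x, y, z] (by simpa [Fin.sum_univ_three] using hs)
    (by rw [Finset.weightedVSub_eq_linear_combination _ (by simpa [Fin.sum_univ_three] using hs)]
        simpa [Fin.sum_univ_three] using he)
  exact ⟨hw 0, hw 1, hw 2⟩

variable {a b c : k}

theorem cevian_trace_smul_eq (h : ¬ Collinear k {A, B, C}) {P D : V}
    (habc : a + b + c = 1) (hP : P = a • A + b • B + c • C) (hPA : P ≠ A)
    (hBCD : Collinear k {B, C, D}) (hAPD : Collinear k {A, P, D}) :
    b + c ≠ 0 ∧ (b + c) • D = b • B + c • C := by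
  have hBC : B ≠ C := by
    rintro rfl
    exact h (by simpa using collinear_pair k A B)
  have hD : D ∈ line[k, B, C] := hBCD.mem_affineSpan_of_mem_of_ne (by simp) (by simp) (by simp) hBC
  have hD' : D ∈ line[k, A, P] :=
    hAPD.mem_affineSpan_of_mem_of_ne (by simp) (by simp) (by simp) hPA.symm
  obtain ⟨t, rfl⟩ := mem_affineSpan_pair_iff_exists_lineMap_eq.1 hD
  obtain ⟨s, hs⟩ := mem_affineSpan_pair_iff_exists_lineMap_eq.1 hD'
  simp only [AffineMap.lineMap_apply_module, hP] at hs ⊢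
  obtain ⟨hA, hB, hC⟩ := eq_zero_of_smul_add_smul_add_smul_eq_zero h
    (x := 1 - s + s * a) (y := s * b - (1 - t)) (z := s * c - t)
    (by linear_combination s * habc) (by linear_combination (norm := module) hs)
  have hsbc : s * (b + c) = 1 := by linear_combination s * habc - hA
  refine ⟨right_ne_zero_of_mul_eq_one hsbc, ?_⟩
  linear_combination (norm := module) hsbc • (b • B + c • C) - (b + c) • (hB • B + hC • C)

theorem smul_pointReflection_midpoint [Invertible (2 : k)] {s t : k} {D : V}
    (hD : (s + t) • D = s • B + t • C) :
    (s + t) • Equiv.pointReflection (midpoint k B C) D = t • B + s • C := by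
  rw [Equiv.pointReflection_apply, vsub_eq_sub, vadd_eq_add, sub_add_eq_add_sub, midpoint_add_self]
  linear_combination (norm := module) -hD

theorem parallel_reflected_cevians_iff (h : ¬ Collinear k {A, B, C}) {D₃ E₃ : V}
    (hbc : b + c ≠ 0) (hca : c + a ≠ 0)
    (hD₃ : (b + c) • D₃ = c • B + b • C) (hE₃ : (c + a) • E₃ = a • C + c • A) :
    line[k, A, D₃] ∥ line[k, B, E₃] ↔ a * b + b * c + c * a = 0 := by
  rw [affineSpan_pair_parallel_iff_exists_unit_smul]
  constructor
  · rintro ⟨r, hr⟩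
    rw [Units.smul_def] at hr
    obtain ⟨hA, -, hC⟩ := eq_zero_of_smul_add_smul_add_smul_eq_zero h
      (x := (b + c) * (r * (c + a) + c)) (y := -(c + a) * (r * c + (b + c)))
      (z := (b + c) * a - r * (c + a) * b) (by ring)
      (by linear_combination (norm := module) ((b + c) * (c + a)) • hr +
        ((r : k) * (c + a)) • hD₃ - (b + c) • hE₃)
    have hr' : (r : k) * (c + a) + c = 0 := (mul_eq_zero.1 hA).resolve_left hbc
    linear_combination hC + b * hr'
  · intro hσ
    have hc : c ≠ 0 := by
      rintro rfl
      rcases mul_eq_zero.1 (show a * b = 0 by simpa using hσ) with rfl | rfl <;> simp_all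
    have hr : -c / (c + a) * (c + a) = -c := div_mul_cancel₀ _ hca
    refine ⟨Units.mk0 (-c / (c + a)) (div_ne_zero (neg_ne_zero.2 hc) hca), ?_⟩
    apply smul_right_injective V (mul_ne_zero hbc hca)
    rw [Units.smul_mk0]
    linear_combination (norm := module)
      (b + c) • hr • (A - D₃) + c • hD₃ + (b + c) • hE₃ + hσ • (C - B)

theorem apply_apply_eq_anticomplement_iff (h : ¬ Collinear k {A, B, C}) {D₃ E F : V}
    {f f' : V →ᵃ[k] V} (hbc : b + c ≠ 0) (hca : c + a ≠ 0) (hab : a + b ≠ 0)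
    (hD₃ : (b + c) • D₃ = c • B + b • C) (hE : (c + a) • E = c • C + a • A)
    (hF : (a + b) • F = a • A + b • B) (hf'A : f' A = D₃) (hfB : f B = E) (hfC : f C = F) :
    f (f' A) = B + C - A ↔ a * b + b * c + c * a = 0 := by
  subst hf'A hfB hfC
  have hX := f.smul_apply_eq_of_smul_eq (add_comm c b) hD₃
  constructor
  · intro hK
    rw [hK] at hX
    obtain ⟨-, hB, -⟩ := eq_zero_of_smul_add_smul_add_smul_eq_zero h
      (x := -(a + b) * (b + c) * (c + a) - a * c * (a + b) - a * b * (c + a))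
      (y := (a + b) * (b + c) * (c + a) - b ^ 2 * (c + a))
      (z := (a + b) * (b + c) * (c + a) - c ^ 2 * (a + b)) (by ring)
      (by linear_combination (norm := module) ((c + a) * (a + b)) • hX +
        (c * (a + b)) • hE + (b * (c + a)) • hF)
    exact (mul_eq_zero.1 (show (c + a) * (a * b + b * c + c * a) = 0 by
      linear_combination hB)).resolve_left hca
  · intro hσ
    apply smul_right_injective V (mul_ne_zero (mul_ne_zero hab hbc) hca)
    linear_combination (norm := module)
      ((c + a) * (a + b)) • hX + (c * (a + b)) • hE + (b * (c + a)) • hF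
      + hσ • ((2 * a + b + c) • A - (c + a) • B - (a + b) • C)

theorem comp_eq_homothety_neg_two_iff (hspan : affineSpan k {A, B, C} = ⊤)
    (h : ¬ Collinear k {A, B, C}) {G D E F D₃ E₃ F₃ : V} (hG : (3 : k) • G = A + B + C)
    (hbc : b + c ≠ 0) (hca : c + a ≠ 0) (hab : a + b ≠ 0)
    (hD : (b + c) • D = b • B + c • C) (hE : (c + a) • E = c • C + a • A)
    (hF : (a + b) • F = a • A + b • B) (hD₃ : (b + c) • D₃ = c • B + b • C)
    (hE₃ : (c + a) • E₃ = a • C + c • A) (hF₃ : (a + b) • F₃ = b • A + a • B)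
    {f f' : V →ᵃ[k] V} (hfA : f A = D) (hfB : f B = E) (hfC : f C = F)
    (hf'A : f' A = D₃) (hf'B : f' B = E₃) (hf'C : f' C = F₃) :
    f.comp f' = AffineMap.homothety G (-2 : k) ↔ a * b + b * c + c * a = 0 := by
  have hBCA : ¬ Collinear k {B, C, A} := by rwa [Set.pair_comm, Set.insert_comm]
  have hCAB : ¬ Collinear k {C, A, B} := by rwa [Set.pair_comm, Set.insert_comm]
  have hKA := AffineMap.homothety_neg_two_apply_of_three_smul_eq hG
  have hKB := AffineMap.homothety_neg_two_apply_of_three_smul_eq (X := B) (Y := C) (Z := A)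
    (by rw [hG]; abel)
  have hKC := AffineMap.homothety_neg_two_apply_of_three_smul_eq (X := C) (Y := A) (Z := B)
    (by rw [hG]; abel)
  have hA := apply_apply_eq_anticomplement_iff h hbc hca hab hD₃ hE hF hf'A hfB hfC
  have hB := apply_apply_eq_anticomplement_iff hBCA hca hab hbc hE₃ hF hD hf'B hfC hfA
  have hC := apply_apply_eq_anticomplement_iff hCAB hab hbc hca hF₃ hD hE hf'C hfA hfB
  refine ⟨fun hK ↦ hA.1 (by rw [← AffineMap.comp_apply, hK, hKA]), fun hσ ↦ ?_⟩
  refine AffineMap.ext_on hspan ?_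
  rintro X (rfl | rfl | rfl)
  · rw [AffineMap.comp_apply, hKA, hA]
    exact hσ
  · rw [AffineMap.comp_apply, hKB, hB]
    linear_combination hσ
  · rw [AffineMap.comp_apply, hKC, hC]
    linear_combination hσ

theorem stmt_19_general (A B C G P D E F D0 E0 F0 D3 E3 F3 : Pt) (T T' : Pt →ᵃ[ℝ] Pt)
(hABC : AffineIndependent ℝ ![A, B, C])
    (hG : G = (1/3 : ℝ) • (A + B + C))
    (hD : Collinear ℝ {B, C, D}) (hDcev : Collinear ℝ {A, P, D})
    (hE : Collinear ℝ {C, A, E}) (hEcev : Collinear ℝ {B, P, E})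
    (hF : Collinear ℝ {A, B, F}) (hFcev : Collinear ℝ {C, P, F})
    (hD0 : D0 = midpoint ℝ B C) (hE0 : E0 = midpoint ℝ C A) (hF0 : F0 = midpoint ℝ A B)
(hD3 : D3 = Equiv.pointReflection D0 D)
    (hE3 : E3 = Equiv.pointReflection E0 E)
    (hF3 : F3 = Equiv.pointReflection F0 F)
    (hPA : P ≠ A) (hPB : P ≠ B) (hPC : P ≠ C)
    (hTA : T A = D) (hTB : T B = E) (hTC : T C = F)
    (hT'A : T' A = D3) (hT'B : T' B = E3) (hT'C : T' C = F3) :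
    (line[ℝ, A, D3] ∥ line[ℝ, B, E3] ∧ line[ℝ, B, E3] ∥ line[ℝ, C, F3] ∧
        line[ℝ, A, D3] ∥ line[ℝ, C, F3]) ↔
      T.comp T' = AffineMap.homothety G (-2 : ℝ) := by
  have hABC' : ¬ Collinear ℝ {A, B, C} := affineIndependent_iff_not_collinear_set.1 hABC
  have hBCA : ¬ Collinear ℝ {B, C, A} := by rwa [Set.pair_comm, Set.insert_comm]
  have hCAB : ¬ Collinear ℝ {C, A, B} := by rwa [Set.pair_comm, Set.insert_comm]
  have hspan := affineSpan_eq_top_of_finrank_eq_two finrank_euclideanSpace_fin hABC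
  obtain ⟨a, b, c, habc, hP⟩ := exists_eq_smul_add_smul_add_smul hspan P
  obtain ⟨hbc, hD'⟩ := cevian_trace_smul_eq hABC' habc hP hPA hD hDcev
  obtain ⟨hca, hE'⟩ := cevian_trace_smul_eq hBCA (a := b) (b := c) (c := a)
    (by linear_combination habc) (by rw [hP]; abel) hPB hE hEcev
  obtain ⟨hab, hF'⟩ := cevian_trace_smul_eq hCAB (a := c) (b := a) (c := b)
    (by linear_combination habc) (by rw [hP]; abel) hPC hF hFcev
  have hD3' : (b + c) • D3 = c • B + b • C := hD3 ▸ hD0 ▸ smul_pointReflection_midpoint hD'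
  have hE3' : (c + a) • E3 = a • C + c • A := hE3 ▸ hE0 ▸ smul_pointReflection_midpoint hE'
  have hF3' : (a + b) • F3 = b • A + a • B := hF3 ▸ hF0 ▸ smul_pointReflection_midpoint hF'
  have h3G : (3 : ℝ) • G = A + B + C := by rw [hG, smul_smul]; norm_num
  rw [comp_eq_homothety_neg_two_iff hspan hABC' h3G hbc hca hab hD' hE' hF' hD3' hE3' hF3'
    hTA hTB hTC hT'A hT'B hT'C, parallel_reflected_cevians_iff hABC' hbc hca hD3' hE3',
    parallel_reflected_cevians_iff hBCA hca hab hE3' hF3', AffineSubspace.parallel_comm,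
    parallel_reflected_cevians_iff hCAB hab hbc hF3' hD3']
  refine ⟨fun h ↦ h.1, fun h ↦ ⟨h, by linear_combination h, by linear_combination h⟩⟩

theorem stmt_19 (A B C G P D E F D0 E0 F0 D3 E3 F3 : Pt) (T T' : Pt →ᵃ[ℝ] Pt)
(hABC : AffineIndependent ℝ ![A, B, C])
    (hG : G = (1/3 : ℝ) • (A + B + C))
    (hPa : ¬ Collinear ℝ {B, C, P})
    (hPb : ¬ Collinear ℝ {C, A, P})
    (hPc : ¬ Collinear ℝ {A, B, P})
    (hD : Collinear ℝ {B, C, D}) (hDcev : Collinear ℝ {A, P, D})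
    (hE : Collinear ℝ {C, A, E}) (hEcev : Collinear ℝ {B, P, E})
    (hF : Collinear ℝ {A, B, F}) (hFcev : Collinear ℝ {C, P, F})
    (hD0 : D0 = midpoint ℝ B C) (hE0 : E0 = midpoint ℝ C A) (hF0 : F0 = midpoint ℝ A B)
(hD3 : D3 = Equiv.pointReflection D0 D)
    (hE3 : E3 = Equiv.pointReflection E0 E)
    (hF3 : F3 = Equiv.pointReflection F0 F)
    (hPA : P ≠ A) (hPB : P ≠ B) (hPC : P ≠ C)
    (hTA : T A = D) (hTB : T B = E) (hTC : T C = F)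
    (hT'A : T' A = D3) (hT'B : T' B = E3) (hT'C : T' C = F3) :
    (line[ℝ, A, D3] ∥ line[ℝ, B, E3] ∧ line[ℝ, B, E3] ∥ line[ℝ, C, F3] ∧
        line[ℝ, A, D3] ∥ line[ℝ, C, F3]) ↔
      T.comp T' = AffineMap.homothety G (-2 : ℝ) :=
  stmt_19_general A B C G P D E F D0 E0 F0 D3 E3 F3 T T' hABC hG hD hDcev hE hEcev hF hFcev hD0 hE0
    hF0 hD3 hE3 hF3 hPA hPB hPC hTA hTB hTC hT'A hT'B hT'C
end
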